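/- arXiv:2412.17416 — 11 statements merged into one kernel-verified Lean document; each statement's English description precedes it below -/
import Mathlib

section
/- Gomory–Hu inequality: for every finite ultrametric space (X,d) with X nonempty, the number of distinct values attained by d (including 0) is at most |X|, i.e., |Sp(X)| ≤ |X|. -/
/-- Gomory–Hu inequality: in a finite nonempty ultrametric space the number of
distinct values of the metric (including `0`) is at most the number of points. -/
theorem gomory_hu {X : Type*} [MetricSpace X] [Fintype X] [Nonempty X]
    (hu : ∀ x y z : X, dist x y ≤ max (dist x z) (dist z y)) :
    (Set.range fun p : X × X => dist p.1 p.2).ncard ≤ Fintype.card X := by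
  classical
  have key : ∀ n : ℕ, ∀ s : Finset X, s.card ≤ n → s.Nonempty →
      ((s ×ˢ s).image fun p : X × X => dist p.1 p.2).card ≤ s.card := by
    intro n
    induction n with
    | zero =>
      intro s hs hne
      exact absurd (Finset.card_eq_zero.mp (Nat.le_zero.mp hs))
        (Finset.nonempty_iff_ne_empty.mp hne)
    | succ n ih =>
      intro s hs hne
      set f : X × X → ℝ := fun p => dist p.1 p.2 with hf
      have hspec : ((s ×ˢ s).image f).Nonempty := by
        obtain ⟨x, hx⟩ := hne
        exact ⟨dist x x, Finset.mem_image.mpr ⟨(x, x), Finset.mem_product.mpr ⟨hx, hx⟩, rfl⟩⟩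
      set D := ((s ×ˢ s).image f).max' hspec with hD
      have hDmem := ((s ×ˢ s).image f).max'_mem hspec
      obtain ⟨p, hp, hpD⟩ := Finset.mem_image.mp hDmem
      obtain ⟨hp1, hp2⟩ := Finset.mem_product.mp hp
      have hmax : ∀ x ∈ s, ∀ y ∈ s, dist x y ≤ D := by
        intro x hx y hy
        exact Finset.le_max' ((s ×ˢ s).image f) (dist x y) (Finset.mem_image.mpr
          ⟨(x, y), Finset.mem_product.mpr ⟨hx, hy⟩, rfl⟩)
      by_cases hD0 : D ≤ 0
      · -- all distances are 0
        have hsub : (s ×ˢ s).image f ⊆ {0} := by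
          intro d hd
          obtain ⟨q, hq, rfl⟩ := Finset.mem_image.mp hd
          obtain ⟨hq1, hq2⟩ := Finset.mem_product.mp hq
          have h1 := hmax _ hq1 _ hq2
          have h2 := dist_nonneg (x := q.1) (y := q.2)
          simp only [Finset.mem_singleton, hf]
          linarith
        calc ((s ×ˢ s).image f).card ≤ ({0} : Finset ℝ).card := Finset.card_le_card hsub
          _ = 1 := Finset.card_singleton _
          _ ≤ s.card := Finset.card_pos.mpr hne
      · push_neg at hD0
        set x₀ := p.1
        set y₀ := p.2
        set t := s.filter (fun y => dist x₀ y < D) with ht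
        set u := s \ t with huu
        have htsub : t ⊆ s := Finset.filter_subset _ _
        have hx₀t : x₀ ∈ t := by
          simp only [ht, Finset.mem_filter]
          exact ⟨hp1, by simpa using hD0⟩
        have hy₀t : y₀ ∉ t := by
          simp only [ht, Finset.mem_filter]
          intro h
          have : dist x₀ y₀ = D := hpD
          linarith [h.2, this.ge]
        have hy₀u : y₀ ∈ u := Finset.mem_sdiff.mpr ⟨hp2, hy₀t⟩
        have hx₀u : x₀ ∉ u := fun h => (Finset.mem_sdiff.mp h).2 hx₀t
        have hcard_sum : t.card + u.card = s.card := by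
          rw [huu]
          rw [Finset.card_sdiff_of_subset htsub]
          have := Finset.card_le_card htsub
          omega
        have htlt : t.card < s.card :=
          Finset.card_lt_card (Finset.ssubset_iff_of_subset htsub |>.mpr ⟨y₀, hp2, hy₀t⟩)
        have hult : u.card < s.card :=
          Finset.card_lt_card (Finset.ssubset_iff_of_subset (Finset.sdiff_subset) |>.mpr
            ⟨x₀, hp1, hx₀u⟩)
        -- cross distances equal D
        have hcross : ∀ x ∈ t, ∀ y ∈ u, dist x y = D := by
          intro x hx y hy
          obtain ⟨hxs, hxlt⟩ := Finset.mem_filter.mp hx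
          obtain ⟨hys, hyt⟩ := Finset.mem_sdiff.mp hy
          have hynlt : ¬ dist x₀ y < D := by
            intro h
            exact hyt (Finset.mem_filter.mpr ⟨hys, h⟩)
          have hxy0 : dist x₀ y = D :=
            le_antisymm (hmax _ hp1 _ hys) (not_lt.mp hynlt)
          have h1 : dist x₀ y ≤ max (dist x₀ x) (dist x y) := hu _ _ _
          have h2 : dist x y ≤ D := hmax _ hxs _ hys
          rcases le_or_gt D (dist x y) with h | h
          · linarith
          · exfalso
            have : dist x₀ y < D := lt_of_le_of_lt h1 (max_lt hxlt h)
            linarith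
        set A := (t ×ˢ t).image f with hA
        set B := (u ×ˢ u).image f with hB
        have h0A : (0 : ℝ) ∈ A := Finset.mem_image.mpr
          ⟨(x₀, x₀), Finset.mem_product.mpr ⟨hx₀t, hx₀t⟩, by simp [hf]⟩
        have h0B : (0 : ℝ) ∈ B := Finset.mem_image.mpr
          ⟨(y₀, y₀), Finset.mem_product.mpr ⟨hy₀u, hy₀u⟩, by simp [hf]⟩
        have hsub : (s ×ˢ s).image f ⊆ insert D (A ∪ B.erase 0) := by
          intro d hd
          obtain ⟨q, hq, rfl⟩ := Finset.mem_image.mp hd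
          obtain ⟨hq1, hq2⟩ := Finset.mem_product.mp hq
          by_cases h1 : q.1 ∈ t <;> by_cases h2 : q.2 ∈ t
          · refine Finset.mem_insert.mpr (Or.inr (Finset.mem_union_left _ ?_))
            exact Finset.mem_image.mpr ⟨q, Finset.mem_product.mpr ⟨h1, h2⟩, rfl⟩
          · have : f q = D := hcross _ h1 _ (Finset.mem_sdiff.mpr ⟨hq2, h2⟩)
            rw [this]; exact Finset.mem_insert_self _ _
          · have : dist q.2 q.1 = D := hcross _ h2 _ (Finset.mem_sdiff.mpr ⟨hq1, h1⟩)
            have heq : f q = D := by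
              simpa [hf, dist_comm] using this
            rw [heq]; exact Finset.mem_insert_self _ _
          · have hq1u : q.1 ∈ u := Finset.mem_sdiff.mpr ⟨hq1, h1⟩
            have hq2u : q.2 ∈ u := Finset.mem_sdiff.mpr ⟨hq2, h2⟩
            have hmemB : f q ∈ B := Finset.mem_image.mpr
              ⟨q, Finset.mem_product.mpr ⟨hq1u, hq2u⟩, rfl⟩
            by_cases h0 : f q = 0
            · rw [h0]
              exact Finset.mem_insert.mpr (Or.inr (Finset.mem_union_left _ h0A))
            · exact Finset.mem_insert.mpr (Or.inr (Finset.mem_union_right _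
                (Finset.mem_erase.mpr ⟨h0, hmemB⟩)))
        have hIA : A.card ≤ t.card := ih t (by omega) ⟨x₀, hx₀t⟩
        have hIB : B.card ≤ u.card := ih u (by omega) ⟨y₀, hy₀u⟩
        have hBpos : 1 ≤ B.card := Finset.card_pos.mpr ⟨0, h0B⟩
        have herase : (B.erase 0).card = B.card - 1 := Finset.card_erase_of_mem h0B
        calc ((s ×ˢ s).image f).card ≤ (insert D (A ∪ B.erase 0)).card :=
              Finset.card_le_card hsub
          _ ≤ (A ∪ B.erase 0).card + 1 := Finset.card_insert_le _ _
          _ ≤ (A.card + (B.erase 0).card) + 1 := by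
              have := Finset.card_union_le A (B.erase 0); omega
          _ ≤ s.card := by omega
  have huniv := key (Fintype.card X) Finset.univ (by simp) Finset.univ_nonempty
  have hrange : (Set.range fun p : X × X => dist p.1 p.2) =
      ↑((Finset.univ ×ˢ Finset.univ : Finset (X × X)).image fun p : X × X => dist p.1 p.2) := by
    simp [Finset.coe_image, Set.image_univ]
  rw [hrange, Set.ncard_coe_finset]
  simpa using huniv
end

section
/- Let (X,d) be a finite ultrametric space viewed as a complete weighted graph with edge weights w({x,y}) = d(x,y), and let T be a minimum weight spanning tree of this graph. Then for every pair of distinct points x, y, the distance d(x,y) equals the maximum weight of an edge on the unique path in T connecting x and y. -/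
/-!
Let `uv` be an edge on the tree path from `x` to `y`. Deleting `uv` separates `x` from `y`, so
adding `xy` instead gives another spanning tree, of weight at most `w(T) - d(u,v) + d(x,y)`;
minimality of `T` forces `d(u,v) ≤ d(x,y)`. Conversely, the ultrametric inequality applied along
the path bounds `d(x,y)` by the largest edge weight on it.
-/

/-- The weight of an edge of the complete graph on a metric space. -/
noncomputable def edgeWeight (X : Type*) [MetricSpace X] : Sym2 X → ℝ :=
  Sym2.lift ⟨fun x y => dist x y, fun x y => dist_comm x y⟩

/-- The total weight of (the edges of) a graph on a finite metric space. -/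
noncomputable def graphWeight {X : Type*} [MetricSpace X] [Fintype X]
    (G : SimpleGraph X) : ℝ :=
  ∑ e ∈ G.edgeSet.toFinite.toFinset, edgeWeight X e

/-- A minimum weight spanning tree of the complete weighted graph on a finite
metric space `X` with weights given by the metric: a tree on the vertex set `X`
whose total weight is minimal among all such trees. -/
def IsMST {X : Type*} [MetricSpace X] [Fintype X] (T : SimpleGraph X) : Prop :=
  T.IsTree ∧ ∀ G : SimpleGraph X, G.IsTree → graphWeight T ≤ graphWeight G

/-- The path graph `x 0 — x 1 — ⋯ — x (n-1)` on `X`. -/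
def pathGraphOn {X : Type*} (n : ℕ) (x : ℕ → X) : SimpleGraph X :=
  SimpleGraph.fromRel (fun u v => ∃ i : ℕ, i + 1 < n ∧ u = x i ∧ v = x (i + 1))

namespace SimpleGraph

variable {V : Type*} {G H : SimpleGraph V}

lemma Walk.reachable_deleteEdges_left_or_right {u v a b : V} (w : G.Walk a b)
    (hb : (G.deleteEdges {s(u, v)}).Reachable b u ∨ (G.deleteEdges {s(u, v)}).Reachable b v) :
    (G.deleteEdges {s(u, v)}).Reachable a u ∨ (G.deleteEdges {s(u, v)}).Reachable a v := by
  induction w with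
  | nil => exact hb
  | @cons a c b hac _ ih =>
    by_cases he : s(a, c) = s(u, v)
    · rcases Sym2.eq_iff.mp he with ⟨rfl, -⟩ | ⟨rfl, -⟩
      exacts [.inl .rfl, .inr .rfl]
    · have had : (G.deleteEdges {s(u, v)}).Adj a c := (deleteEdges_adj ..).mpr ⟨hac, he⟩
      exact (ih hb).imp had.reachable.trans had.reachable.trans

lemma Connected.reachable_deleteEdges_left_or_right (hG : G.Connected) (u v a : V) :
    (G.deleteEdges {s(u, v)}).Reachable a u ∨ (G.deleteEdges {s(u, v)}).Reachable a v :=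
  (hG.preconnected a u).some.reachable_deleteEdges_left_or_right (.inl .rfl)

lemma Connected.connected_of_deleteEdges_le (hG : G.Connected) {u v x y : V}
    (hH : G.deleteEdges {s(u, v)} ≤ H) (hsep : ¬ (G.deleteEdges {s(u, v)}).Reachable x y)
    (hxy : H.Reachable x y) : H.Connected := by
  have huv : H.Reachable u v := by
    rcases hG.reachable_deleteEdges_left_or_right u v x with hx | hx <;>
      rcases hG.reachable_deleteEdges_left_or_right u v y with hy | hy
    · exact absurd (hx.trans hy.symm) hsep
    · exact (hx.symm.mono hH).trans (hxy.trans (hy.mono hH))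
    · exact (hy.symm.mono hH).trans (hxy.symm.trans (hx.mono hH))
    · exact absurd (hx.trans hy.symm) hsep
  have hu : ∀ a, H.Reachable a u := fun a =>
    (hG.reachable_deleteEdges_left_or_right u v a).elim (·.mono hH)
      fun hav => (hav.mono hH).trans huv.symm
  have : Nonempty V := ⟨u⟩
  exact ⟨fun a b => (hu a).trans (hu b).symm⟩

lemma IsAcyclic.not_reachable_deleteEdges_of_mem_edges (hG : G.IsAcyclic) {x y : V}
    {p : G.Walk x y} (hp : p.IsPath) {e : Sym2 V} (he : e ∈ p.edges) :
    ¬ (G.deleteEdges {e}).Reachable x y := by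
  classical
  induction e using Sym2.ind with | _ u v =>
  rw [reachable_deleteEdges_iff_exists_walk]
  rintro ⟨q, hq⟩
  have hbypass : q.bypass = p :=
    congrArg Subtype.val ((hG.subsingleton_path x y).elim ⟨_, q.bypass_isPath⟩ ⟨p, hp⟩)
  exact hq (q.edges_bypass_subset_edges (hbypass ▸ he))

lemma IsTree.isTree_deleteEdges_sup_edge (hG : G.IsTree) {x y : V} {p : G.Walk x y}
    (hp : p.IsPath) {u v : V} (he : s(u, v) ∈ p.edges) :
    (G.deleteEdges {s(u, v)} ⊔ edge x y).IsTree := by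
  have hsep := hG.isAcyclic.not_reachable_deleteEdges_of_mem_edges hp he
  have hne : x ≠ y := by rintro rfl; exact hsep .rfl
  refine ⟨hG.connected.connected_of_deleteEdges_le le_sup_left hsep ?_,
    (hG.isAcyclic.anti (deleteEdges_le _)).sup_edge_of_not_reachable hsep⟩
  exact Adj.reachable (Or.inr ((edge_adj ..).mpr ⟨.inl ⟨rfl, rfl⟩, hne⟩))

end SimpleGraph

section Weight

variable {X : Type*} [MetricSpace X]

@[simp] lemma edgeWeight_mk (x y : X) : edgeWeight X s(x, y) = dist x y := rfl

lemma edgeWeight_nonneg (e : Sym2 X) : 0 ≤ edgeWeight X e := by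
  induction e using Sym2.ind with | _ x y => exact dist_nonneg

open SimpleGraph in
/-- Only an inequality: `s(x, y)` may already be an edge of `G`, or `x = y`. -/
lemma graphWeight_deleteEdges_sup_edge_le [Fintype X] {G : SimpleGraph X} {e : Sym2 X}
    (he : e ∈ G.edgeSet) (x y : X) :
    graphWeight (G.deleteEdges {e} ⊔ edge x y) ≤ graphWeight G - edgeWeight X e + dist x y := by
  classical
  set E := G.edgeSet.toFinite.toFinset
  have hsub : (G.deleteEdges {e} ⊔ edge x y).edgeSet.toFinite.toFinset
      ⊆ insert s(x, y) (E.erase e) := by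
    intro f
    simp only [Set.Finite.mem_toFinset, edgeSet_sup, edgeSet_deleteEdges, Finset.mem_insert,
      Finset.mem_erase, E]
    rintro (⟨hfG, hfe⟩ | hf)
    · exact .inr ⟨hfe, hfG⟩
    · exact .inl (edgeSet_edge_subset hf)
  have hinsert : ∑ f ∈ insert s(x, y) (E.erase e), edgeWeight X f
      ≤ dist x y + ∑ f ∈ E.erase e, edgeWeight X f := by
    by_cases hxy : s(x, y) ∈ E.erase e
    · rw [Finset.insert_eq_of_mem hxy]; linarith [dist_nonneg (x := x) (y := y)]
    · rw [Finset.sum_insert hxy, edgeWeight_mk]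
  calc graphWeight (G.deleteEdges {e} ⊔ edge x y)
      ≤ ∑ f ∈ insert s(x, y) (E.erase e), edgeWeight X f :=
        Finset.sum_le_sum_of_subset_of_nonneg hsub fun f _ _ => edgeWeight_nonneg f
    _ ≤ dist x y + ∑ f ∈ E.erase e, edgeWeight X f := hinsert
    _ = graphWeight G - edgeWeight X e + dist x y := by
        rw [Finset.sum_erase_eq_sub (by simpa [E] using he), graphWeight]; ring

lemma IsMST.edgeWeight_le_dist_of_mem_edges [Fintype X] {T : SimpleGraph X} (hT : IsMST T)
    {x y : X} {p : T.Walk x y} (hp : p.IsPath) {e : Sym2 X} (he : e ∈ p.edges) :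
    edgeWeight X e ≤ dist x y := by
  induction e using Sym2.ind with | _ u v =>
  have hmin := hT.2 _ (hT.1.isTree_deleteEdges_sup_edge hp he)
  have hexchange := graphWeight_deleteEdges_sup_edge_le (p.edges_subset_edgeSet he) x y
  linarith

lemma dist_le_maximum_edgeWeight_of_walk [IsUltrametricDist X] {G : SimpleGraph X}
    {a b : X} (w : G.Walk a b) (hab : a ≠ b) :
    (dist a b : WithBot ℝ) ≤ (w.edges.map (edgeWeight X)).maximum := by
  induction w with
  | nil => exact absurd rfl hab
  | @cons a c b _ q ih =>
    rw [SimpleGraph.Walk.edges_cons, List.map_cons, List.maximum_cons, edgeWeight_mk]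
    by_cases hcb : c = b
    · subst hcb
      exact le_max_left _ _
    · calc (dist a b : WithBot ℝ) ≤ ((max (dist a c) (dist c b) : ℝ) : WithBot ℝ) :=
            WithBot.coe_le_coe.mpr (dist_triangle_max a c b)
        _ = max (dist a c : WithBot ℝ) (dist c b) := WithBot.coe_max _ _
        _ ≤ _ := max_le_max le_rfl (ih hcb)

end Weight

/-- In a finite ultrametric space, the distance between two distinct points equals
the maximum weight of an edge on the unique path joining them in any minimum
weight spanning tree. -/
theorem dist_eq_max_edge_on_mst_path {X : Type*} [MetricSpace X] [Fintype X]
    (hu : ∀ x y z : X, dist x y ≤ max (dist x z) (dist z y))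
    (T : SimpleGraph X) (hT : IsMST T) (x y : X) (hxy : x ≠ y)
    (p : T.Walk x y) (hp : p.IsPath) :
    (p.edges.map (edgeWeight X)).maximum = (dist x y : WithBot ℝ) := by
  have : IsUltrametricDist X := ⟨fun a b c => hu a c b⟩
  refine le_antisymm (List.maximum_le_of_forall_le ?_) (dist_le_maximum_edgeWeight_of_walk p hxy)
  simp only [List.mem_map]
  rintro _ ⟨e, he, rfl⟩
  exact WithBot.coe_le_coe.mpr (hT.edgeWeight_le_dist_of_mem_edges hp he)
end

section
/- Let (X,d) be a finite ultrametric space with n points and let x_1, ..., x_n be an enumeration of X produced greedily: x_1 arbitrary, and each x_{i+1} minimizes d(x, x_i) over all x not in {x_1,...,x_i}. Then the path x_1 — x_2 — ... — x_n is a minimum weight spanning tree of the complete weighted graph on X with weights given by d. -/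
/-!
In an ultrametric space the greedy rule makes `dist (x m) (x k)` non-increasing in `k < m`:
`d(x m, x (k+1)) ≤ max (d(x m, x k)) (d(x k, x (k+1)))`, and the greedy choice of `x (k+1)` bounds
the second term by the first. Hence the path edge `x k — x (k+1)` is a lightest edge leaving
`{x 0, …, x k}`, and the cut property (exchanging one tree edge across each cut in turn) turns any
spanning tree into one that contains the path and weighs no more. The path is connected and lies
inside a tree, so it is a spanning tree of no larger weight.
-/
def IsGreedyEnum {X : Type*} [MetricSpace X] (n : ℕ) (x : ℕ → X) : Prop :=
  ∀ i : ℕ, i + 1 < n → ∀ y : X, (∀ j : ℕ, j ≤ i → y ≠ x j) →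
    dist (x (i + 1)) (x i) ≤ dist y (x i)

namespace IsGreedyEnum
variable {X : Type*} [MetricSpace X] {n : ℕ} {x : ℕ → X}

lemma dist_succ_le (hx : IsGreedyEnum n x) (hinj : Set.InjOn x (Set.Iio n)) {k m : ℕ}
    (hkm : k < m) (hm : m < n) : dist (x (k + 1)) (x k) ≤ dist (x m) (x k) :=
  hx k (by omega) (x m) fun j hj h => by
    have := hinj (show m < n from hm) (show j < n by omega) h
    omega

lemma dist_le_dist_of_le [IsUltrametricDist X] (hx : IsGreedyEnum n x)
    (hinj : Set.InjOn x (Set.Iio n)) {j k m : ℕ} (hjk : j ≤ k) (hkm : k < m) (hm : m < n) :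
    dist (x m) (x k) ≤ dist (x m) (x j) := by
  induction k, hjk using Nat.le_induction with
  | base => rfl
  | succ k hjk ih =>
    calc dist (x m) (x (k + 1)) ≤ max (dist (x m) (x k)) (dist (x k) (x (k + 1))) :=
          IsUltrametricDist.dist_triangle_max ..
      _ ≤ dist (x m) (x k) := by
          rw [dist_comm (x k)]
          exact max_le le_rfl (hx.dist_succ_le hinj (by omega) hm)
      _ ≤ dist (x m) (x j) := ih (by omega)

lemma dist_succ_le_dist [IsUltrametricDist X] (hx : IsGreedyEnum n x)
    (hinj : Set.InjOn x (Set.Iio n)) {j k m : ℕ} (hjk : j ≤ k) (hkm : k < m) (hm : m < n) :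
    dist (x k) (x (k + 1)) ≤ dist (x j) (x m) := by
  rw [dist_comm, dist_comm (x j)]
  exact (hx.dist_succ_le hinj hkm hm).trans (hx.dist_le_dist_of_le hinj hjk hkm hm)

end IsGreedyEnum

namespace SimpleGraph

variable {V : Type*} {G H : SimpleGraph V}

lemma Reachable.of_forall_adj_reachable (h : ∀ ⦃a b⦄, G.Adj a b → H.Reachable a b) {u v : V}
    (huv : G.Reachable u v) : H.Reachable u v := by
  rw [reachable_iff_reflTransGen] at huv ⊢
  exact Relation.reflTransGen_closed (fun a b hab => (reachable_iff_reflTransGen a b).1 (h hab))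
    _ _ huv

theorem Walk.IsTrail.exists_boundary_edge {a b : V} {w : G.Walk a b} (hw : w.IsTrail)
    {S : Set V} (ha : a ∈ S) (hb : b ∉ S) :
    ∃ u ∈ S, ∃ v ∉ S, s(u, v) ∈ w.edges ∧
      (G.deleteEdges {s(u, v)}).Reachable a u ∧ (G.deleteEdges {s(u, v)}).Reachable v b := by
  induction w with
  | nil => exact absurd ha hb
  | @cons a c b hac w ih =>
    rw [Walk.isTrail_cons] at hw
    by_cases hc : c ∈ S
    · obtain ⟨u, hu, v, hv, huv, hau, hvb⟩ := ih hw.1 hc hb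
      have hac' : (G.deleteEdges {s(u, v)}).Adj a c :=
        deleteEdges_adj.2 ⟨hac, fun h => hw.2 (Set.mem_singleton_iff.1 h ▸ huv)⟩
      exact ⟨u, hu, v, hv, by simp [huv], hac'.reachable.trans hau, hvb⟩
    · exact ⟨a, ha, c, hc, by simp, .rfl, (w.toDeleteEdge _ hw.2).reachable⟩

theorem IsTree.exists_isTree_exchange [Finite V] {T : SimpleGraph V} (hT : T.IsTree)
    {S : Set V} {u v : V} (hu : u ∈ S) (hv : v ∉ S) (huv : ¬ T.Adj u v) :
    ∃ c ∈ S, ∃ d ∉ S, T.Adj c d ∧ (T.deleteEdges {s(c, d)} ⊔ edge u v).IsTree := by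
  obtain ⟨p, hp⟩ := hT.connected.exists_isPath u v
  obtain ⟨c, hc, d, hd, hcd, huc, hdv⟩ := hp.isTrail.exists_boundary_edge hu hv
  have hne : u ≠ v := fun h => hv (h ▸ hu)
  set T' := T.deleteEdges {s(c, d)} ⊔ edge u v
  have hle : T.deleteEdges {s(c, d)} ≤ T' := le_sup_left
  have hT'uv : T'.Adj u v :=
    (le_sup_right : edge u v ≤ T') ((edge_adj ..).2 ⟨Or.inl ⟨rfl, rfl⟩, hne⟩)
  have hT'cd : T'.Reachable c d :=
    ((huc.mono hle).symm.trans hT'uv.reachable).trans (hdv.mono hle).symm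
  have hTT' : ∀ ⦃a b⦄, T.Adj a b → T'.Reachable a b := by
    intro a b hab
    by_cases h : s(a, b) = s(c, d)
    · rcases Sym2.eq_iff.1 h with ⟨rfl, rfl⟩ | ⟨rfl, rfl⟩
      exacts [hT'cd, hT'cd.symm]
    · exact (hle (deleteEdges_adj.2 ⟨hab, h⟩)).reachable
  have hedges : T'.edgeSet = insert s(u, v) (T.edgeSet \ {s(c, d)}) := by
    rw [edgeSet_sup, edgeSet_deleteEdges, edgeSet_edge_of_ne hne, Set.union_singleton]
  refine ⟨c, hc, d, hd, p.adj_of_mem_edges hcd, ?_⟩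
  rw [isTree_iff_connected_and_card] at hT ⊢
  refine ⟨(connected_iff _).2 ⟨fun a b => (hT.1.preconnected a b).of_forall_adj_reachable hTT',
    hT.1.nonempty⟩, ?_⟩
  rw [← hT.2, Nat.card_coe_set_eq, Nat.card_coe_set_eq, hedges,
    Set.ncard_insert_of_notMem (fun h => huv h.1), Set.ncard_sdiff_singleton_add_one]
  exact p.edges_subset_edgeSet hcd

end SimpleGraph

open SimpleGraph

@[simp]
lemma edgeWeight_mk_s7 {X : Type*} [MetricSpace X] (a b : X) : edgeWeight X s(a, b) = dist a b := rfl

section GraphWeight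
variable {X : Type*} [MetricSpace X] [Fintype X]

lemma graphWeight_mono {G H : SimpleGraph X} (h : G ≤ H) : graphWeight G ≤ graphWeight H := by
  refine Finset.sum_le_sum_of_subset_of_nonneg (by simpa using edgeSet_mono h) fun e _ _ => ?_
  induction e using Sym2.ind with
  | _ a b => exact dist_nonneg

lemma graphWeight_deleteEdges_sup_edge {T : SimpleGraph X} {c d u v : X} (hcd : T.Adj c d)
    (huv : ¬ T.Adj u v) (hne : u ≠ v) :
    graphWeight (T.deleteEdges {s(c, d)} ⊔ edge u v) = graphWeight T - dist c d + dist u v := by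
  classical
  have hedges : (T.deleteEdges {s(c, d)} ⊔ edge u v).edgeSet.toFinite.toFinset =
      insert s(u, v) (T.edgeSet.toFinite.toFinset.erase s(c, d)) := by
    ext e
    simp [edgeSet_sup, edgeSet_deleteEdges, edgeSet_edge_of_ne hne, and_comm]
  rw [graphWeight, graphWeight, hedges, Finset.sum_insert (by simp [huv]),
    Finset.sum_erase_eq_sub (by simpa using hcd), edgeWeight_mk_s7, edgeWeight_mk_s7]
  ring

theorem exists_isTree_adj_of_cut {m : ℕ} {S : ℕ → Set X} {a b : ℕ → X}
    (ha : ∀ k < m, a k ∈ S k) (hb : ∀ k < m, b k ∉ S k)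
    (hprev : ∀ i k, i < k → k < m → a i ∈ S k ∧ b i ∈ S k)
    (hmin : ∀ k < m, ∀ u ∈ S k, ∀ v ∉ S k, dist (a k) (b k) ≤ dist u v)
    {G : SimpleGraph X} (hG : G.IsTree) :
    ∃ T : SimpleGraph X, T.IsTree ∧ (∀ k < m, T.Adj (a k) (b k)) ∧
      graphWeight T ≤ graphWeight G := by
  induction m with
  | zero => exact ⟨G, hG, by simp, le_rfl⟩
  | succ m ih =>
    obtain ⟨T, hT, hTadj, hTG⟩ := ih (fun k hk => ha k (by omega)) (fun k hk => hb k (by omega))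
      (fun i k hik hk => hprev i k hik (by omega)) (fun k hk => hmin k (by omega))
    by_cases hm : T.Adj (a m) (b m)
    · refine ⟨T, hT, fun k hk => ?_, hTG⟩
      obtain hk | rfl := Nat.lt_succ_iff_lt_or_eq.1 hk
      exacts [hTadj k hk, hm]
    obtain ⟨c, hc, d, hd, hcd, hT'⟩ := hT.exists_isTree_exchange (ha m m.lt_succ_self)
      (hb m m.lt_succ_self) hm
    have hne : a m ≠ b m := fun h => hb m m.lt_succ_self (h ▸ ha m m.lt_succ_self)
    refine ⟨_, hT', fun k hk => ?_, ?_⟩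
    · obtain hk | rfl := Nat.lt_succ_iff_lt_or_eq.1 hk
      · obtain ⟨hak, hbk⟩ := hprev k m hk m.lt_succ_self
        refine Or.inl (deleteEdges_adj.2 ⟨hTadj k hk, fun h => hd ?_⟩)
        rcases Sym2.eq_iff.1 (Set.mem_singleton_iff.1 h) with ⟨-, rfl⟩ | ⟨rfl, -⟩
        exacts [hbk, hak]
      · exact Or.inr ((edge_adj ..).2 ⟨Or.inl ⟨rfl, rfl⟩, hne⟩)
    · rw [graphWeight_deleteEdges_sup_edge hcd hm hne]
      linarith [hmin m m.lt_succ_self c hc d hd]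

end GraphWeight

section PathGraphOn
variable {X : Type*} {n : ℕ} {x : ℕ → X}

lemma pathGraphOn_le {G : SimpleGraph X} (h : ∀ i, i + 1 < n → G.Adj (x i) (x (i + 1))) :
    pathGraphOn n x ≤ G := by
  intro u v
  rw [pathGraphOn, fromRel_adj]
  rintro ⟨-, ⟨i, hi, rfl, rfl⟩ | ⟨i, hi, rfl, rfl⟩⟩
  exacts [h i hi, (h i hi).symm]

lemma pathGraphOn_reachable {k : ℕ} (hk : k < n) : (pathGraphOn n x).Reachable (x 0) (x k) := by
  induction k with
  | zero => rfl
  | succ k ih =>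
    refine (ih (by omega)).trans ?_
    by_cases h : x k = x (k + 1)
    · rw [h]
    · exact Adj.reachable ((fromRel_adj ..).2 ⟨h, Or.inl ⟨k, hk, rfl, rfl⟩⟩)

lemma pathGraphOn_connected (hsurj : ∀ y, ∃ k < n, x k = y) : (pathGraphOn n x).Connected := by
  rw [connected_iff_exists_forall_reachable]
  refine ⟨x 0, fun y => ?_⟩
  obtain ⟨k, hk, rfl⟩ := hsurj y
  exact pathGraphOn_reachable hk

end PathGraphOn

namespace IsGreedyEnum
variable {X : Type*} [MetricSpace X] {n : ℕ} {x : ℕ → X}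

theorem exists_isTree_pathGraphOn_le [IsUltrametricDist X] [Fintype X] (hx : IsGreedyEnum n x)
    (hinj : Set.InjOn x (Set.Iio n)) (hsurj : ∀ y, ∃ k < n, x k = y)
    {G : SimpleGraph X} (hG : G.IsTree) :
    ∃ T : SimpleGraph X, T.IsTree ∧ pathGraphOn n x ≤ T ∧
      graphWeight T ≤ graphWeight G := by
  obtain ⟨T, hT, hadj, hTG⟩ := exists_isTree_adj_of_cut (m := n - 1)
    (S := fun k => x '' Set.Iic k) (a := x) (b := fun k => x (k + 1))
    (fun k _ => Set.mem_image_of_mem x (Set.mem_Iic.2 le_rfl))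
    (fun k hk ⟨j, hj, h⟩ => by
      have hj : j ≤ k := hj
      have := hinj (show j < n by omega) (show k + 1 < n by omega) h
      omega)
    (fun i k hik _ => ⟨Set.mem_image_of_mem x hik.le, Set.mem_image_of_mem x hik⟩)
    (by
      rintro k hk _ ⟨j, hj, rfl⟩ v hv
      obtain ⟨m, hm, rfl⟩ := hsurj v
      have hkm : k < m := lt_of_not_ge fun h => hv (Set.mem_image_of_mem x h)
      exact hx.dist_succ_le_dist hinj hj hkm hm)
    hG
  exact ⟨T, hT, pathGraphOn_le fun i hi => hadj i (by omega), hTG⟩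

end IsGreedyEnum

/-- Greedy algorithm (Algorithm 2): if `x 0, …, x (n-1)` enumerates a finite
ultrametric space so that each `x (i+1)` minimizes the distance to `x i` among
the points not yet chosen, then the path `x 0 — ⋯ — x (n-1)` is a minimum
weight spanning tree. -/
theorem greedy_path_isMST {X : Type*} [MetricSpace X] [Fintype X]
    (hu : ∀ x y z : X, dist x y ≤ max (dist x z) (dist z y))
    (n : ℕ) (x : ℕ → X)
    (hbij : Function.Bijective fun i : Fin n => x i.val)
    (hgreedy : ∀ i : ℕ, i + 1 < n →
      ∀ y : X, (∀ j : ℕ, j ≤ i → y ≠ x j) → dist (x (i + 1)) (x i) ≤ dist y (x i)) :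
    IsMST (pathGraphOn n x) := by
  have : IsUltrametricDist X := ⟨fun a b c => hu a c b⟩
  have : Nonempty X := ⟨x 0⟩
  have hinj : Set.InjOn x (Set.Iio n) := fun i hi j hj h =>
    congrArg Fin.val (hbij.1 (a₁ := ⟨i, hi⟩) (a₂ := ⟨j, hj⟩) h)
  have hsurj : ∀ y, ∃ k < n, x k = y := fun y =>
    let ⟨k, hk⟩ := hbij.2 y
    ⟨k, k.2, hk⟩
  have hx : IsGreedyEnum n x := hgreedy
  obtain ⟨T₀, -, hT₀⟩ := (connected_top (V := X)).exists_isTree_le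
  obtain ⟨T, hT, hPT, -⟩ := hx.exists_isTree_pathGraphOn_le hinj hsurj hT₀
  refine ⟨⟨pathGraphOn_connected hsurj, hT.isAcyclic.anti hPT⟩, fun G hG => ?_⟩
  obtain ⟨T, -, hPT, hTG⟩ := hx.exists_isTree_pathGraphOn_le hinj hsurj hG
  exact (graphWeight_mono hPT).trans hTG
end

section
/- Let (X,d) be a finite ultrametric space and let P = (x_1,...,x_n) be an enumeration of X such that the path x_1—...—x_n is a minimum weight spanning tree. Set s_i = d(x_i, x_{i+1}). Then for any i ≤ k and any index j with i ≤ j < k, the set {x_i, ..., x_k} is a closed ball of (X,d) whenever all weights s_i,...,s_{k-1} are strictly less than both s_{i-1} (if i > 1) and s_k (if k < n). -/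
/-! Let `r` be the largest edge weight inside the block. The ultrametric inequality along the
block puts all of it in the closed ball of radius `r` about `x i`. Conversely, a point `x j`
with `j < i` is separated from `x i` by the path edge `x (i - 1) — x i`; exchanging that edge
for `x j — x i` gives another spanning tree, so minimality forces
`d(x j, x i) ≥ s (i - 1) > r`, and symmetrically for `j > k`. -/

namespace SimpleGraph

variable {V : Type*} {G : SimpleGraph V}

theorem Reachable.mem_iff_of_forall_adj {S : Set V}
    (hS : ∀ u v, G.Adj u v → (u ∈ S ↔ v ∈ S)) {u v : V} (h : G.Reachable u v) :
    u ∈ S ↔ v ∈ S := by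
  obtain ⟨w⟩ := h
  induction w with
  | nil => rfl
  | cons hadj _ ih => exact (hS _ _ hadj).trans ih

theorem Reachable.deleteEdges_or {p q w : V} (h : G.Reachable w p) :
    (G.deleteEdges {s(p, q)}).Reachable w p ∨ (G.deleteEdges {s(p, q)}).Reachable w q := by
  rw [reachable_iff_reflTransGen] at h
  induction h using Relation.ReflTransGen.head_induction_on with
  | refl => exact Or.inl .rfl
  | @head a b hadj _ ih =>
    by_cases he : s(a, b) = s(p, q)
    · rcases Sym2.eq_iff.mp he with ⟨rfl, -⟩ | ⟨rfl, -⟩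
      · exact Or.inl .rfl
      · exact Or.inr .rfl
    · have hab : (G.deleteEdges {s(p, q)}).Adj a b := by simp [hadj, he]
      exact ih.imp hab.reachable.trans hab.reachable.trans

theorem IsTree.sup_edge_deleteEdges {T : SimpleGraph V} (hT : T.IsTree) {p q u v : V}
    (huv : ¬(T.deleteEdges {s(p, q)}).Reachable u v) :
    (T.deleteEdges {s(p, q)} ⊔ edge u v).IsTree := by
  set D := T.deleteEdges {s(p, q)}
  have hne : u ≠ v := by rintro rfl; exact huv .rfl
  have hpq : (D ⊔ edge u v).Reachable p q := by
    have hedge : (D ⊔ edge u v).Reachable u v :=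
      (show (D ⊔ edge u v).Adj u v by simp [edge_adj, hne]).reachable
    rcases (hT.connected u p).deleteEdges_or (q := q) with hu | hu <;>
    rcases (hT.connected v p).deleteEdges_or (q := q) with hv | hv
    · exact absurd (hu.trans hv.symm) huv
    · exact (hu.mono le_sup_left).symm.trans (hedge.trans (hv.mono le_sup_left))
    · exact (hv.mono le_sup_left).symm.trans (hedge.symm.trans (hu.mono le_sup_left))
    · exact absurd (hu.trans hv.symm) huv
  refine ⟨(connected_iff_exists_forall_reachable _).2 ⟨p, fun w => ?_⟩,
    (hT.isAcyclic.anti (deleteEdges_le _)).sup_edge_of_not_reachable huv⟩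
  rcases (hT.connected w p).deleteEdges_or (q := q) with hw | hw
  · exact (hw.mono le_sup_left).symm
  · exact hpq.trans (hw.mono le_sup_left).symm

end SimpleGraph

section MinimumSpanningTree

variable {X : Type*} [MetricSpace X] [Fintype X]

theorem graphWeight_eq_finsum (G : SimpleGraph X) :
    graphWeight G = ∑ᶠ e ∈ G.edgeSet, edgeWeight X e :=
  (finsum_mem_eq_finite_toFinset_sum _ _).symm

theorem graphWeight_sup_edge_deleteEdges {T : SimpleGraph X} {p q u v : X} (hpq : T.Adj p q)
    (huv : ¬(T.deleteEdges {s(p, q)}).Reachable u v) :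
    graphWeight (T.deleteEdges {s(p, q)} ⊔ SimpleGraph.edge u v) + dist p q =
      graphWeight T + dist u v := by
  have hne : u ≠ v := by rintro rfl; exact huv .rfl
  have hnotMem : s(u, v) ∉ T.edgeSet \ {s(p, q)} := fun h =>
    huv (SimpleGraph.Adj.reachable (by rwa [← SimpleGraph.edgeSet_deleteEdges] at h))
  have hedges : (T.deleteEdges {s(p, q)} ⊔ SimpleGraph.edge u v).edgeSet =
      insert s(u, v) (T.edgeSet \ {s(p, q)}) := by
    rw [SimpleGraph.edgeSet_sup, SimpleGraph.edgeSet_deleteEdges,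
      SimpleGraph.edgeSet_edge_of_ne hne, Set.union_singleton]
  rw [graphWeight_eq_finsum, graphWeight_eq_finsum, hedges,
    finsum_mem_insert _ hnotMem (Set.toFinite _),
    ← finsum_mem_add_sdiff (Set.singleton_subset_iff.2 (T.mem_edgeSet.2 hpq)) (Set.toFinite _),
    finsum_mem_singleton]
  simp only [edgeWeight, Sym2.lift_mk]
  ring

theorem IsMST.dist_le_of_not_reachable_deleteEdges {T : SimpleGraph X} (hT : IsMST T)
    {p q u v : X} (hpq : T.Adj p q) (huv : ¬(T.deleteEdges {s(p, q)}).Reachable u v) :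
    dist p q ≤ dist u v := by
  have := hT.2 _ (hT.1.sup_edge_deleteEdges huv)
  linarith [graphWeight_sup_edge_deleteEdges hpq huv]

end MinimumSpanningTree

theorem IsUltrametricDist.dist_le_of_forall_dist_succ_le {X : Type*} [PseudoMetricSpace X]
    [IsUltrametricDist X] {x : ℕ → X} {r : ℝ} (hr : 0 ≤ r) {i j : ℕ} (hij : i ≤ j)
    (h : ∀ l, i ≤ l → l < j → dist (x l) (x (l + 1)) ≤ r) : dist (x i) (x j) ≤ r := by
  induction j, hij using Nat.le_induction with
  | base => simpa using hr
  | succ j hij ih =>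
    exact (dist_triangle_max _ (x j) _).trans
      (max_le (ih fun l hil hlj => h l hil (by omega)) (h j hij (by omega)))

section PathGraph

variable {X : Type*} {n : ℕ} {x : ℕ → X}

theorem pathGraphOn_adj (hinj : Set.InjOn x (Set.Iio n)) {m : ℕ} (hm : m + 1 < n) :
    (pathGraphOn n x).Adj (x m) (x (m + 1)) := by
  rw [pathGraphOn, SimpleGraph.fromRel_adj]
  refine ⟨fun h => ?_, Or.inl ⟨m, hm, rfl, rfl⟩⟩
  have := hinj (Set.mem_Iio.2 (by omega)) (Set.mem_Iio.2 hm) h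
  omega

theorem not_reachable_deleteEdges_pathGraphOn (hinj : Set.InjOn x (Set.Iio n)) {a m b : ℕ}
    (ham : a ≤ m) (hmb : m < b) (hb : b < n) :
    ¬((pathGraphOn n x).deleteEdges {s(x m, x (m + 1))}).Reachable (x a) (x b) := by
  have hside : ∀ l, l < n → (x l ∈ x '' Set.Iic m ↔ l ≤ m) := fun l hl =>
    hinj.mem_image_iff (fun t ht => Set.mem_Iio.2 (lt_of_le_of_lt (Set.mem_Iic.1 ht) (by omega)))
      (Set.mem_Iio.2 hl)
  intro h
  have hab := h.mem_iff_of_forall_adj (S := x '' Set.Iic m) fun u v huv => by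
    rw [SimpleGraph.deleteEdges_adj, pathGraphOn, SimpleGraph.fromRel_adj] at huv
    obtain ⟨⟨-, ⟨l, hl, rfl, rfl⟩ | ⟨l, hl, rfl, rfl⟩⟩, hne⟩ := huv <;>
    · have hlm : l ≠ m := by rintro rfl; simp [Sym2.eq_swap] at hne
      rw [hside l (by omega), hside (l + 1) hl]
      omega
  rw [hside a (by omega), hside b hb] at hab
  omega

theorem IsMST.dist_succ_le_of_pathGraphOn [MetricSpace X] [Fintype X]
    (hmst : IsMST (pathGraphOn n x)) (hinj : Set.InjOn x (Set.Iio n)) {a m b : ℕ}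
    (ham : a ≤ m) (hmb : m < b) (hb : b < n) :
    dist (x m) (x (m + 1)) ≤ dist (x a) (x b) :=
  hmst.dist_le_of_not_reachable_deleteEdges (pathGraphOn_adj hinj (by omega))
    (not_reachable_deleteEdges_pathGraphOn hinj ham hmb hb)

end PathGraph

/-- Remark 2.7: in a minimum spanning path of a finite ultrametric space, a block
of consecutive points all of whose internal edge weights are strictly smaller
than the two surrounding edge weights forms a closed ball of the space. -/
theorem consecutive_block_is_ball {X : Type*} [MetricSpace X] [Fintype X]
    (hu : ∀ x y z : X, dist x y ≤ max (dist x z) (dist z y))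
    (n : ℕ) (x : ℕ → X)
    (hbij : Function.Bijective fun i : Fin n => x i.val)
    (hmst : IsMST (pathGraphOn n x))
    (s : ℕ → ℝ) (hs : ∀ i : ℕ, i + 1 < n → s i = dist (x i) (x (i + 1)))
    (i k : ℕ) (hik : i ≤ k) (hk : k < n)
    (hleft : 1 ≤ i → ∀ l : ℕ, i ≤ l → l < k → s l < s (i - 1))
    (hright : k + 1 < n → ∀ l : ℕ, i ≤ l → l < k → s l < s k) :
    ∃ (c : X) (r : ℝ), 0 ≤ r ∧
      {y : X | ∃ j : ℕ, i ≤ j ∧ j ≤ k ∧ y = x j} = Metric.closedBall c r := by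
  have : IsUltrametricDist X := ⟨fun a b c => hu a c b⟩
  have hinj : Set.InjOn x (Set.Iio n) := fun p hp q hq h =>
    congrArg Fin.val (hbij.injective (a₁ := ⟨p, hp⟩) (a₂ := ⟨q, hq⟩) h)
  set r := (Finset.Ico i k).fold max 0 s
  have hr : 0 ≤ r := (Finset.le_fold_max _).2 (Or.inl le_rfl)
  have hr_lt : ∀ m, m + 1 < n → (∀ l, i ≤ l → l < k → s l < s m) →
      r < dist (x m) (x (m + 1)) := by
    intro m hm h
    rw [← hs m hm]
    refine (Finset.fold_max_lt _).2 ⟨hs m hm ▸ dist_pos.2 (pathGraphOn_adj hinj hm).ne, ?_⟩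
    exact fun l hl => h l (Finset.mem_Ico.1 hl).1 (Finset.mem_Ico.1 hl).2
  refine ⟨x i, r, hr, Set.Subset.antisymm ?_ ?_⟩
  · rintro _ ⟨j, hij, hjk, rfl⟩
    rw [Metric.mem_closedBall, dist_comm]
    refine IsUltrametricDist.dist_le_of_forall_dist_succ_le hr hij fun l hil hlj => ?_
    rw [← hs l (by omega)]
    exact (Finset.le_fold_max _).2 (Or.inr ⟨l, Finset.mem_Ico.2 ⟨hil, by omega⟩, le_rfl⟩)
  · intro y hy
    obtain ⟨⟨j, hj⟩, rfl⟩ := hbij.surjective y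
    replace hy : dist (x i) (x j) ≤ r := by rw [dist_comm]; exact hy
    refine ⟨j, ?_, ?_, rfl⟩ <;> by_contra! hj'
    · have hi : i - 1 + 1 = i := by omega
      have hsep := hmst.dist_succ_le_of_pathGraphOn hinj (a := j) (m := i - 1) (b := i)
        (by omega) (by omega) (by omega)
      have hgap := hr_lt (i - 1) (by omega) (hleft (by omega))
      rw [hi] at hsep hgap
      linarith [dist_comm (x j) (x i)]
    · have hsep := hmst.dist_succ_le_of_pathGraphOn hinj hik hj' hj
      have hgap := hr_lt k (by omega) (hright (by omega))
      linarith
end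

section
/- Let (X,d) be a finite ultrametric space with no equilateral triangles (no three distinct points pairwise equidistant), and let x_1,...,x_n enumerate X so that the path x_1—...—x_n is a minimum weight spanning tree, with s_i = d(x_i,x_{i+1}). Then whenever s_i = s_j with i < j, there exists k with i < k < j and s_k > s_i. -/
namespace SimpleGraph

variable {V : Type*}

theorem Reachable.lift {G H : SimpleGraph V} (hGH : ∀ u v, G.Adj u v → H.Reachable u v)
    {u v : V} (h : G.Reachable u v) : H.Reachable u v := by
  rw [reachable_eq_reflTransGen] at h
  induction h with
  | refl => rfl
  | tail _ hadj ih => exact ih.trans (hGH _ _ hadj)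

theorem reachable_of_forall_adj_succ {G : SimpleGraph V} {x : ℕ → V} {k l : ℕ} (hkl : k ≤ l)
    (h : ∀ t, k ≤ t → t < l → G.Adj (x t) (x (t + 1))) : G.Reachable (x k) (x l) := by
  induction l, hkl using Nat.le_induction with
  | base => rfl
  | succ l hkl ih =>
    exact (ih fun t hkt htl => h t hkt (by omega)).trans (h l hkl (by omega)).reachable

theorem IsAcyclic.not_reachable_sdiff_edge {T : SimpleGraph V} (hT : T.IsAcyclic) {u v a b : V}
    (huv : T.Adj u v) (ha : (T \ edge u v).Reachable a u) (hb : (T \ edge u v).Reachable b v) :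
    ¬ (T \ edge u v).Reachable a b := fun hab =>
  isBridge_iff.mp (isAcyclic_iff_forall_adj_isBridge.mp hT huv) (ha.symm.trans (hab.trans hb))

theorem IsTree.sdiff_edge_sup_edge {T : SimpleGraph V} (hT : T.IsTree) {u v a b : V}
    (huv : T.Adj u v) (ha : (T \ edge u v).Reachable a u) (hb : (T \ edge u v).Reachable b v) :
    (T \ edge u v ⊔ edge a b).IsTree := by
  set T₀ := T \ edge u v
  have hcut := IsAcyclic.not_reachable_sdiff_edge hT.isAcyclic huv ha hb
  have hab : a ≠ b := fun h => hcut (h ▸ .rfl)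
  have hreach_uv : (T₀ ⊔ edge a b).Reachable u v :=
    (ha.symm.mono le_sup_left).trans <|
      (Adj.reachable (Or.inr ((edge_adj ..).mpr ⟨Or.inl ⟨rfl, rfl⟩, hab⟩))).trans
        (hb.mono le_sup_left)
  have hreach_adj : ∀ p q, T.Adj p q → (T₀ ⊔ edge a b).Reachable p q := by
    intro p q hpq
    by_cases h₀ : T₀.Adj p q
    · exact Adj.reachable (Or.inl h₀)
    · simp only [T₀, sdiff_adj, edge_adj, hpq, true_and, not_not] at h₀
      rcases h₀.1 with ⟨rfl, rfl⟩ | ⟨rfl, rfl⟩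
      exacts [hreach_uv, hreach_uv.symm]
  have := hT.connected.nonempty
  exact ⟨.mk fun p q => (hT.connected.preconnected p q).lift hreach_adj,
    (hT.isAcyclic.anti sdiff_le).sup_edge_of_not_reachable hcut⟩

end SimpleGraph

open SimpleGraph

section MinimumSpanningTree

variable {X : Type*} [MetricSpace X] [Fintype X]

theorem graphWeight_sup_edge {G : SimpleGraph X} {a b : X} (hab : a ≠ b) (h : ¬ G.Adj a b) :
    graphWeight (G ⊔ edge a b) = graphWeight G + dist a b := by
  classical
  have hedges : (G ⊔ edge a b).edgeSet.toFinite.toFinset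
      = insert s(a, b) G.edgeSet.toFinite.toFinset := by
    ext e
    simp [edgeSet_sup, edgeSet_edge_of_ne hab]
  rw [graphWeight, hedges, Finset.sum_insert (by simpa using h), add_comm]
  rfl

theorem graphWeight_sdiff_edge {G : SimpleGraph X} {u v : X} (h : G.Adj u v) :
    graphWeight (G \ edge u v) = graphWeight G - dist u v := by
  classical
  have hedges : (G \ edge u v).edgeSet.toFinite.toFinset
      = G.edgeSet.toFinite.toFinset.erase s(u, v) := by
    ext e
    simp [edgeSet_sdiff, edgeSet_edge_of_ne h.ne, and_comm]
  rw [graphWeight, hedges, Finset.sum_erase_eq_sub (by simpa using h)]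
  rfl

/-- The cut property of minimum spanning trees. -/
theorem IsMST.dist_le_of_reachable_sdiff_edge {T : SimpleGraph X} (hT : IsMST T) {u v a b : X}
    (huv : T.Adj u v) (ha : (T \ edge u v).Reachable a u) (hb : (T \ edge u v).Reachable b v) :
    dist u v ≤ dist a b := by
  have hcut := IsAcyclic.not_reachable_sdiff_edge hT.1.isAcyclic huv ha hb
  have hab : a ≠ b := fun h => hcut (h ▸ .rfl)
  have hle := hT.2 _ (hT.1.sdiff_edge_sup_edge huv ha hb)
  rw [graphWeight_sup_edge hab fun h => hcut h.reachable, graphWeight_sdiff_edge huv] at hle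
  linarith

end MinimumSpanningTree

theorem IsUltrametricDist.dist_le_of_forall_dist_succ_le_s10 {X : Type*} [Dist X]
    [IsUltrametricDist X] {x : ℕ → X} {C : ℝ} {k l : ℕ} (hkl : k < l)
    (h : ∀ t, k ≤ t → t < l → dist (x t) (x (t + 1)) ≤ C) : dist (x k) (x l) ≤ C := by
  induction l, hkl using Nat.le_induction with
  | base => exact h k le_rfl k.lt_succ_self
  | succ l hkl ih =>
    exact (dist_triangle_max _ (x l) _).trans
      (max_le (ih fun t hkt htl => h t hkt (by omega)) (h l (by omega) (by omega)))

section PathGraph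

variable {X : Type*} {n : ℕ} {x : ℕ → X}

theorem pathGraphOn_adj_succ (hx : Set.InjOn x (Set.Iio n)) {k : ℕ} (hk : k + 1 < n) :
    (pathGraphOn n x).Adj (x k) (x (k + 1)) := by
  rw [pathGraphOn, fromRel_adj]
  exact ⟨hx.ne (show k < n by omega) hk (by omega), Or.inl ⟨k, hk, rfl, rfl⟩⟩

theorem pathGraphOn_sdiff_edge_adj_succ (hx : Set.InjOn x (Set.Iio n)) {j k : ℕ}
    (hj : j + 1 < n) (hk : k + 1 < n) (hkj : k ≠ j) :
    (pathGraphOn n x \ edge (x j) (x (j + 1))).Adj (x k) (x (k + 1)) := by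
  refine ⟨pathGraphOn_adj_succ hx hk, fun hedge => ?_⟩
  obtain ⟨⟨hxk, -⟩ | ⟨hxk, hxk_succ⟩, -⟩ := (edge_adj ..).mp hedge
  · exact hkj (hx (show k < n by omega) (show j < n by omega) hxk)
  · have := hx (show k < n by omega) hj hxk
    have := hx hk (show j < n by omega) hxk_succ
    omega

theorem IsMST.dist_le_of_pathGraphOn [MetricSpace X] [Fintype X] (hT : IsMST (pathGraphOn n x))
    (hx : Set.InjOn x (Set.Iio n)) {a j b : ℕ} (haj : a ≤ j) (hjb : j < b) (hb : b < n) :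
    dist (x j) (x (j + 1)) ≤ dist (x a) (x b) := by
  have hadj : ∀ k, k + 1 < n → k ≠ j →
      (pathGraphOn n x \ edge (x j) (x (j + 1))).Adj (x k) (x (k + 1)) :=
    fun k hk hkj => pathGraphOn_sdiff_edge_adj_succ hx (by omega) hk hkj
  refine hT.dist_le_of_reachable_sdiff_edge (pathGraphOn_adj_succ hx (by omega)) ?_ ?_
  · exact reachable_of_forall_adj_succ haj fun t _ htj => hadj t (by omega) (by omega)
  · exact (reachable_of_forall_adj_succ hjb fun t hjt _ => hadj t (by omega) (by omega)).symm

end PathGraph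

/-- Proposition 3.2 (i)⇒(ii): in a finite ultrametric space with no equilateral
triangles, whenever two edge weights of a minimum spanning path coincide, a
strictly larger weight occurs between them. -/
theorem no_equilateral_spanning_path {X : Type*} [MetricSpace X] [Fintype X]
    (hu : ∀ x y z : X, dist x y ≤ max (dist x z) (dist z y))
    (hneq : ∀ a b c : X, a ≠ b → b ≠ c → a ≠ c →
      ¬ (dist a b = dist b c ∧ dist b c = dist a c))
    (n : ℕ) (x : ℕ → X)
    (hbij : Function.Bijective fun i : Fin n => x i.val)
    (hmst : IsMST (pathGraphOn n x))
    (s : ℕ → ℝ) (hs : ∀ i : ℕ, i + 1 < n → s i = dist (x i) (x (i + 1)))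
    (i j : ℕ) (hij : i < j) (hj : j + 1 < n) (heq : s i = s j) :
    ∃ k : ℕ, i < k ∧ k < j ∧ s i < s k := by
  have : IsUltrametricDist X := ⟨fun a b c => hu a c b⟩
  have hx : Set.InjOn x (Set.Iio n) := fun k hk l hl h =>
    congrArg Fin.val (hbij.injective (a₁ := ⟨k, hk⟩) (a₂ := ⟨l, hl⟩) h)
  have hne : ∀ {k l}, k < n → l < n → k ≠ l → x k ≠ x l := fun hk hl => hx.ne hk hl
  by_contra! hmax
  have hstep : ∀ t, i ≤ t → t ≤ j → dist (x t) (x (t + 1)) ≤ s i := by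
    intro t hit htj
    rw [← hs t (by omega)]
    rcases hit.eq_or_lt with rfl | hit
    · exact le_rfl
    rcases htj.eq_or_lt with rfl | htj
    · exact heq.ge
    exact hmax t hit htj
  have hsj : dist (x j) (x (j + 1)) = s i := (hs j hj).symm.trans heq.symm
  have hdist_to_end : ∀ a, i ≤ a → a ≤ j → dist (x a) (x (j + 1)) = s i := by
    intro a hia haj
    refine le_antisymm
      (IsUltrametricDist.dist_le_of_forall_dist_succ_le_s10 (by omega)
        fun t hat htj => hstep t (by omega) (by omega))
      (hsj ▸ hmst.dist_le_of_pathGraphOn hx haj (by omega) hj)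
  exact hneq (x i) (x (i + 1)) (x (j + 1)) (hne (by omega) (by omega) (by omega))
    (hne (by omega) hj (by omega)) (hne (by omega) hj (by omega))
    ⟨(hs i (by omega)).symm.trans (hdist_to_end (i + 1) (by omega) (by omega)).symm,
      (hdist_to_end (i + 1) (by omega) (by omega)).trans (hdist_to_end i le_rfl hij.le).symm⟩
end

section
/- Let (X,d) be a finite ultrametric space and let x_1,...,x_n enumerate X so that the path x_1—...—x_n is a minimum weight spanning tree, with s_i = d(x_i,x_{i+1}). If all the values s_1,...,s_{n-1} are pairwise distinct, then |Sp(X)| = |X|, i.e., the number of distinct distance values (including 0) equals the number of points. -/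
/-- Proposition 3.6 (ii)⇒(i): if the edge weights of a minimum spanning path of a
finite ultrametric space are pairwise distinct, then the number of distinct
distance values (including `0`) equals the number of points. -/
theorem distinct_weights_spectrum_card {X : Type*} [MetricSpace X] [Fintype X]
    [Nonempty X]
    (hu : ∀ x y z : X, dist x y ≤ max (dist x z) (dist z y))
    (n : ℕ) (x : ℕ → X)
    (hbij : Function.Bijective fun i : Fin n => x i.val)
    (hmst : IsMST (pathGraphOn n x))
    (s : ℕ → ℝ) (hs : ∀ i : ℕ, i + 1 < n → s i = dist (x i) (x (i + 1)))
    (hdistinct : ∀ i j : ℕ, i + 1 < n → j + 1 < n → i ≠ j → s i ≠ s j) :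
    (Set.range fun p : X × X => dist p.1 p.2).ncard = Fintype.card X := by
  classical
  obtain ⟨hinj, hsurj⟩ := hbij
  -- n ≥ 1
  have hn : 1 ≤ n := by
    obtain ⟨i, -⟩ := hsurj (Classical.arbitrary X)
    exact i.pos
  -- injectivity on indices
  have hxne : ∀ i j : ℕ, i < n → j < n → i ≠ j → x i ≠ x j := by
    intro i j hi hj hij hxx
    have := hinj (a₁ := ⟨i, hi⟩) (a₂ := ⟨j, hj⟩) hxx
    simp only [Fin.mk.injEq] at this
    exact hij this
  -- key lemma
  have key : ∀ j, j < n → ∀ i, i < j → ∃ k, i ≤ k ∧ k < j ∧ dist (x i) (x j) = s k := by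
    intro j
    induction j with
    | zero => omega
    | succ m ih =>
      intro hj i hi
      rcases eq_or_lt_of_le (Nat.lt_succ_iff.mp hi) with heq | hlt
      · exact ⟨m, by omega, by omega, by rw [heq, hs m hj]⟩
      · obtain ⟨k, hk1, hk2, hk3⟩ := ih (by omega) i hlt
        have hsm : s m = dist (x m) (x (m + 1)) := hs m hj
        by_cases h1 : dist (x i) (x (m + 1)) = s m
        · exact ⟨m, by omega, by omega, h1⟩
        by_cases h2 : dist (x i) (x (m + 1)) = dist (x i) (x m)
        · exact ⟨k, hk1, by omega, h2 ▸ hk3⟩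
        -- forced equality dist (x i) (x m) = s m, contradiction with distinctness
        exfalso
        have A : dist (x i) (x (m + 1)) ≤ max (dist (x i) (x m)) (s m) := by
          rw [hsm]; exact hu _ _ _
        have B : s m ≤ max (dist (x i) (x m)) (dist (x i) (x (m + 1))) := by
          rw [hsm, dist_comm (x i) (x m)]
          exact hu _ _ _
        have C : dist (x i) (x m) ≤ max (dist (x i) (x (m + 1))) (s m) := by
          rw [hsm, dist_comm (x m) (x (m + 1))]
          exact hu _ _ _
        have heqd : dist (x i) (x m) = s m := by
          rcases le_total (dist (x i) (x m)) (s m) with h | h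
          · rcases eq_or_lt_of_le h with he | hlt2
            · exact he
            exfalso
            have hA := A
            rw [max_eq_right hlt2.le] at hA
            have hA' : dist (x i) (x (m + 1)) < s m := lt_of_le_of_ne hA h1
            rcases max_cases (dist (x i) (x m)) (dist (x i) (x (m + 1))) with ⟨hm, -⟩ | ⟨hm, -⟩ <;>
              linarith [B]
          · rcases eq_or_lt_of_le h with he | hlt2
            · exact he.symm
            exfalso
            have hA := A
            rw [max_eq_left h] at hA
            have hA' : dist (x i) (x (m + 1)) < dist (x i) (x m) := lt_of_le_of_ne hA h2
            rcases max_cases (dist (x i) (x (m + 1))) (s m) with ⟨hm, -⟩ | ⟨hm, -⟩ <;>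
              linarith [C]
        exact hdistinct k m (by omega) hj (by omega) (hk3 ▸ heqd ▸ rfl)
  -- the spectrum as a finset
  have hset : (Set.range fun p : X × X => dist p.1 p.2)
      = ↑(insert (0 : ℝ) ((Finset.range (n - 1)).image s)) := by
    ext r
    simp only [Set.mem_range, Finset.coe_insert, Set.mem_insert_iff, Finset.coe_image,
      Set.mem_image, Finset.mem_coe, Finset.mem_range]
    constructor
    · rintro ⟨⟨a, b⟩, rfl⟩
      obtain ⟨⟨i, hi⟩, rfl⟩ := hsurj a
      obtain ⟨⟨j, hj⟩, rfl⟩ := hsurj b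
      simp only
      rcases lt_trichotomy i j with h | h | h
      · obtain ⟨k, -, hk2, hk3⟩ := key j hj i h
        exact Or.inr ⟨k, by omega, hk3.symm⟩
      · subst h; exact Or.inl (dist_self _)
      · obtain ⟨k, -, hk2, hk3⟩ := key i hi j h
        exact Or.inr ⟨k, by omega, by rw [dist_comm] at hk3; exact hk3.symm⟩
    · rintro (rfl | ⟨k, hk, rfl⟩)
      · exact ⟨(Classical.arbitrary X, Classical.arbitrary X), dist_self _⟩
      · exact ⟨(x k, x (k + 1)), (hs k (by omega)).symm⟩
  rw [hset, Set.ncard_coe_finset]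
  have hzero : (0 : ℝ) ∉ (Finset.range (n - 1)).image s := by
    simp only [Finset.mem_image, Finset.mem_range, not_exists]
    rintro k ⟨hk, hk0⟩
    have : x k ≠ x (k + 1) := hxne k (k + 1) (by omega) (by omega) (by omega)
    have : (0 : ℝ) < dist (x k) (x (k + 1)) := dist_pos.mpr this
    rw [← hs k (by omega)] at this
    linarith
  rw [Finset.card_insert_of_notMem hzero,
    Finset.card_image_of_injOn (fun a ha b hb hab => by
      by_contra hne
      exact hdistinct a b (by simp at ha; omega) (by simp at hb; omega) hne hab),
    Finset.card_range]
  have hcard : Fintype.card X = n := by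
    rw [← Fintype.card_fin n]
    exact (Fintype.card_of_bijective ⟨hinj, hsurj⟩).symm
  omega
end

section
/- Let (X,d) be a finite ultrametric space and let x_1,...,x_n enumerate X so that the path x_1—...—x_n is a minimum weight spanning tree with edge weights s_i = d(x_i,x_{i+1}) forming a strictly monotone sequence. Then the values s_1,...,s_{n-1} are exactly the nonzero elements of Sp(X), each attained, and |Sp(X)| = n. -/
/-- Proposition 3.10: if the edge weights of a minimum spanning path of a finite
ultrametric space form a strictly monotone sequence, then these weights are
exactly the nonzero values of the spectrum, and the spectrum has `n` elements. -/
theorem monotone_spanning_path_spectrum {X : Type*} [MetricSpace X] [Fintype X]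
    [Nonempty X]
    (hu : ∀ x y z : X, dist x y ≤ max (dist x z) (dist z y))
    (n : ℕ) (x : ℕ → X)
    (hbij : Function.Bijective fun i : Fin n => x i.val)
    (hmst : IsMST (pathGraphOn n x))
    (s : ℕ → ℝ) (hs : ∀ i : ℕ, i + 1 < n → s i = dist (x i) (x (i + 1)))
    (hmono : (∀ i j : ℕ, i < j → j + 1 < n → s i < s j) ∨
      (∀ i j : ℕ, i < j → j + 1 < n → s j < s i)) :
    (Set.range fun p : X × X => dist p.1 p.2) =
      {0} ∪ {r : ℝ | ∃ i : ℕ, i + 1 < n ∧ s i = r} ∧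
    (Set.range fun p : X × X => dist p.1 p.2).ncard = n := by
  classical
  -- injectivity of `x` on indices `< n`
  have hinj : ∀ a b : ℕ, a < n → b < n → x a = x b → a = b := by
    intro a b ha hb h
    have := hbij.1 (a₁ := ⟨a, ha⟩) (a₂ := ⟨b, hb⟩) h
    exact congrArg Fin.val this
  have hsurj : ∀ u : X, ∃ a : ℕ, a < n ∧ x a = u := by
    intro u
    obtain ⟨i, hi⟩ := hbij.2 u
    exact ⟨i.val, i.2, hi⟩
  have hn : 0 < n := by
    obtain ⟨u⟩ := (inferInstance : Nonempty X)
    obtain ⟨a, ha, -⟩ := hsurj u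
    omega
  have hpos : ∀ i : ℕ, i + 1 < n → 0 < s i := by
    intro i hi
    rw [hs i hi]
    refine dist_pos.2 fun h => ?_
    have := hinj i (i + 1) (by omega) hi h
    omega
  -- the isosceles property of ultrametric spaces
  have hiso : ∀ a b c : X, dist a c < dist c b → dist a b = dist c b := by
    intro a b c h
    refine le_antisymm ((hu a b c).trans (max_le h.le le_rfl)) ?_
    by_contra hlt
    push_neg at hlt
    have h2 := hu c b a
    rw [dist_comm c a] at h2
    have : max (dist a c) (dist a b) < dist c b := max_lt h hlt
    exact absurd h2 (not_le.2 this)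
  -- main distance formula
  have key : ∀ i m : ℕ, i ≤ m → m + 1 < n → ∃ k, k + 1 < n ∧ s k = dist (x i) (x (m + 1)) := by
    rcases hmono with hmono | hmono
    · -- increasing: dist (x i) (x (m+1)) = s m
      have main : ∀ m i : ℕ, i ≤ m → m + 1 < n → dist (x i) (x (m + 1)) = s m := by
        intro m
        induction m with
        | zero => intro i hi h1; interval_cases i; exact (hs 0 h1).symm
        | succ m ih =>
          intro i hi h1
          rcases Nat.lt_or_ge i (m + 1) with hlt | hge
          · have him : i ≤ m := by omega
            have hm1 : m + 1 < n := by omega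
            have hIH : dist (x i) (x (m + 1)) = s m := ih i him hm1
            have hsm : dist (x (m + 1)) (x (m + 2)) = s (m + 1) := (hs (m + 1) h1).symm
            have hlt2 : s m < s (m + 1) := hmono m (m + 1) (by omega) h1
            have := hiso (x i) (x (m + 2)) (x (m + 1)) (by rw [hIH, hsm]; exact hlt2)
            rw [this, hsm]
          · have : i = m + 1 := by omega
            subst this
            exact (hs (m + 1) h1).symm
      intro i m hi h1
      exact ⟨m, h1, (main m i hi h1).symm⟩
    · -- decreasing: dist (x i) (x (m+1)) = s i
      have main : ∀ m i : ℕ, i ≤ m → m + 1 < n → dist (x i) (x (m + 1)) = s i := by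
        intro m
        induction m with
        | zero => intro i hi h1; interval_cases i; exact (hs 0 h1).symm
        | succ m ih =>
          intro i hi h1
          rcases Nat.lt_or_ge i (m + 1) with hlt | hge
          · have him : i ≤ m := by omega
            have hm1 : m + 1 < n := by omega
            have hIH : dist (x i) (x (m + 1)) = s i := ih i him hm1
            have hsm : dist (x (m + 1)) (x (m + 2)) = s (m + 1) := (hs (m + 1) h1).symm
            have hlt2 : s (m + 1) < s i := hmono i (m + 1) (by omega) h1
            have hd : dist (x (m + 2)) (x (m + 1)) < dist (x (m + 1)) (x i) := by
              rw [dist_comm (x (m + 2)) (x (m + 1)), dist_comm (x (m + 1)) (x i), hIH, hsm]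
              exact hlt2
            have := hiso (x (m + 2)) (x i) (x (m + 1)) hd
            rw [dist_comm (x i) (x (m + 2)), this, dist_comm, hIH]
          · have : i = m + 1 := by omega
            subst this
            exact (hs (m + 1) h1).symm
      intro i m hi h1
      have : i + 1 < n := by omega
      exact ⟨i, this, (main m i hi h1).symm⟩
  -- set equality
  have hset : (Set.range fun p : X × X => dist p.1 p.2) =
      {0} ∪ {r : ℝ | ∃ i : ℕ, i + 1 < n ∧ s i = r} := by
    ext r
    constructor
    · rintro ⟨⟨u, v⟩, rfl⟩
      simp only [Set.mem_union, Set.mem_singleton_iff, Set.mem_setOf_eq]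
      by_cases huv : u = v
      · left; simp [huv]
      · right
        obtain ⟨a, ha, rfl⟩ := hsurj u
        obtain ⟨b, hb, rfl⟩ := hsurj v
        have hab : a ≠ b := fun h => huv (by rw [h])
        rcases Nat.lt_or_ge a b with hlt | hge
        · obtain ⟨m, hm⟩ : ∃ m, b = m + 1 := ⟨b - 1, by omega⟩
          subst hm
          exact key a m (by omega) hb
        · have hlt : b < a := by omega
          obtain ⟨m, hm⟩ : ∃ m, a = m + 1 := ⟨a - 1, by omega⟩
          subst hm
          obtain ⟨k, hk1, hk2⟩ := key b m (by omega) ha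
          exact ⟨k, hk1, by rw [hk2, dist_comm]⟩
    · rintro (h0 | ⟨i, hi, rfl⟩)
      · obtain ⟨u⟩ := (inferInstance : Nonempty X)
        refine ⟨(u, u), ?_⟩
        simp only [Set.mem_singleton_iff] at h0
        simp [h0.symm]
      · exact ⟨(x i, x (i + 1)), (hs i hi).symm⟩
  refine ⟨hset, ?_⟩
  rw [hset]
  have himg : {r : ℝ | ∃ i : ℕ, i + 1 < n ∧ s i = r} = s '' Set.Iio (n - 1) := by
    ext r
    simp only [Set.mem_setOf_eq, Set.mem_image, Set.mem_Iio]
    constructor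
    · rintro ⟨i, h1, h2⟩; exact ⟨i, by omega, h2⟩
    · rintro ⟨i, h1, h2⟩; exact ⟨i, by omega, h2⟩
  rw [himg, ← Finset.coe_range, ← Finset.coe_image, Set.union_comm]
  have h0notmem : (0 : ℝ) ∉ ((Finset.range (n - 1)).image s : Finset ℝ) := by
    simp only [Finset.mem_image, Finset.mem_range, not_exists]
    rintro i ⟨h1, h2⟩
    exact absurd h2 (ne_of_gt (hpos i (by omega)))
  have hcard : ((Finset.range (n - 1)).image s).card = n - 1 := by
    rw [Finset.card_image_of_injOn, Finset.card_range]
    intro a ha b hb hab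
    simp only [Finset.coe_range, Set.mem_Iio] at ha hb
    by_contra hne
    rcases Nat.lt_or_ge a b with h | h
    · rcases hmono with hm | hm
      · exact absurd hab (ne_of_lt (hm a b h (by omega)))
      · exact absurd hab.symm (ne_of_lt (hm a b h (by omega)))
    · have h' : b < a := by omega
      rcases hmono with hm | hm
      · exact absurd hab.symm (ne_of_lt (hm b a h' (by omega)))
      · exact absurd hab (ne_of_lt (hm b a h' (by omega)))
  have hins : (↑((Finset.range (n - 1)).image s) ∪ {0} : Set ℝ) =
      ↑(insert (0 : ℝ) ((Finset.range (n - 1)).image s)) := by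
    rw [Finset.coe_insert]
    ext r; simp [or_comm]
  rw [hins, Set.ncard_coe_finset, Finset.card_insert_of_notMem h0notmem, hcard]
  omega
end

section
/- Hausdorff distance between balls: let (Z,d) be a finite ultrametric space and let B and B' be two distinct closed balls of Z. Then the Hausdorff distance d_H(B, B') equals diam(B ∪ B'). -/
open Metric Set Bornology

section Aux

variable {Z : Type*} [MetricSpace Z] [Fintype Z]

/-- Isolation: if x is outside the closed ball around c' of radius r', then its distance
to any point of the ball equals its distance to the center. -/
lemma ultra_iso (hu : ∀ x y z : Z, dist x y ≤ max (dist x z) (dist z y))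
    {c' x y : Z} {r' : ℝ} (hx : r' < dist x c') (hy : dist y c' ≤ r') :
    dist x y = dist x c' := by
  have h1 : dist x y ≤ dist x c' := by
    refine le_trans (hu x y c') (max_le le_rfl ?_)
    rw [dist_comm]; exact hy.trans hx.le
  have h2 : dist x c' ≤ dist x y := by
    have := hu x c' y
    rcases max_cases (dist x y) (dist y c') with ⟨h, _⟩ | ⟨h, _⟩
    · rwa [h] at this
    · rw [h] at this; exact absurd (this.trans hy) (not_le.mpr hx)
  exact le_antisymm h1 h2

/-- If the closed ball around c' of radius r' is included in the closed ball around c of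
radius r (and they are distinct), the Hausdorff distance is the diameter of the union. -/
lemma key (hu : ∀ x y z : Z, dist x y ≤ max (dist x z) (dist z y))
    (c c' : Z) (r r' : ℝ) (hr : 0 ≤ r) (hr' : 0 ≤ r')
    (hsub : closedBall c' r' ⊆ closedBall c r)
    (hne : closedBall c r ≠ closedBall c' r') :
    hausdorffDist (closedBall c r) (closedBall c' r') =
      diam (closedBall c r ∪ closedBall c' r') := by
  have hbs : IsBounded (closedBall c r) := (Set.toFinite _).isBounded
  have hbt : IsBounded (closedBall c' r') := (Set.toFinite _).isBounded
  have hns : (closedBall c r).Nonempty := ⟨c, by simp [hr]⟩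
  have hnt : (closedBall c' r').Nonempty := ⟨c', by simp [hr']⟩
  have hfin : EMetric.hausdorffEdist (closedBall c r) (closedBall c' r') ≠ ⊤ :=
    hausdorffEdist_ne_top_of_nonempty_of_bounded hns hnt hbs hbt
  refine le_antisymm (hausdorffDist_le_diam hns hbs hnt hbt) ?_
  -- pick a point of the big ball farthest from c'
  obtain ⟨x, hxmem, hxmax⟩ :=
    Set.exists_max_image (closedBall c r) (fun p => dist p c') (Set.toFinite _) hns
  set M := dist x c' with hM
  have hc' : c' ∈ closedBall c r := hsub (mem_closedBall_self hr')
  -- M > r', otherwise the balls would coincide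
  have hMr' : r' < M := by
    by_contra h
    push_neg at h
    apply hne
    refine Subset.antisymm (fun p hp => ?_) hsub
    exact mem_closedBall.2 ((hxmax p hp).trans h)
  -- infDist x (small ball) = M
  have hinf : M ≤ infDist x (closedBall c' r') := by
    by_contra h
    push_neg at h
    obtain ⟨y, hy, hlt⟩ := (infDist_lt_iff hnt).1 h
    rw [ultra_iso hu hMr' (mem_closedBall.1 hy)] at hlt
    exact lt_irrefl _ hlt
  have hMH : M ≤ hausdorffDist (closedBall c r) (closedBall c' r') :=
    hinf.trans (infDist_le_hausdorffDist_of_mem hxmem hfin)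
  -- every pair in the union is within distance M
  refine diam_le_of_forall_dist_le (hausdorffDist_nonneg) fun p hp q hq => ?_
  have hp' : p ∈ closedBall c r := by rcases hp with h | h; exact h; exact hsub h
  have hq' : q ∈ closedBall c r := by rcases hq with h | h; exact h; exact hsub h
  have : dist p q ≤ max (dist p c') (dist c' q) := hu p q c'
  refine le_trans (this.trans (max_le (hxmax p hp') ?_)) hMH
  rw [dist_comm]; exact hxmax q hq'

end Aux

/-- In a finite ultrametric space, the Hausdorff distance between two distinct
closed balls equals the diameter of their union. -/
theorem hausdorffDist_balls {Z : Type*} [MetricSpace Z] [Fintype Z]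
    (hu : ∀ x y z : Z, dist x y ≤ max (dist x z) (dist z y))
    (c c' : Z) (r r' : ℝ) (hr : 0 ≤ r) (hr' : 0 ≤ r')
    (hne : Metric.closedBall c r ≠ Metric.closedBall c' r') :
    Metric.hausdorffDist (Metric.closedBall c r) (Metric.closedBall c' r') =
      Metric.diam (Metric.closedBall c r ∪ Metric.closedBall c' r') := by
  -- ball recentering under the ultrametric inequality
  have ball_eq : ∀ (a z : Z) (s : ℝ), dist z a ≤ s →
      closedBall a s = closedBall z s := by
    intro a z s hz
    ext w
    simp only [mem_closedBall]
    constructor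
    · intro hw
      refine le_trans (hu w z a) (max_le hw ?_)
      rw [dist_comm]; exact hz
    · intro hw
      exact le_trans (hu w a z) (max_le hw hz)
  by_cases hint : ∃ z, z ∈ closedBall c r ∩ closedBall c' r'
  · -- intersecting: the balls are nested
    obtain ⟨z, hz1, hz2⟩ := hint
    have e1 : closedBall c r = closedBall z r := ball_eq c z r (mem_closedBall.1 hz1)
    have e2 : closedBall c' r' = closedBall z r' := ball_eq c' z r' (mem_closedBall.1 hz2)
    rcases le_total r' r with h | h
    · have hsub : closedBall c' r' ⊆ closedBall c r := by
        rw [e1, e2]; exact closedBall_subset_closedBall h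
      exact key hu c c' r r' hr hr' hsub hne
    · have hsub : closedBall c r ⊆ closedBall c' r' := by
        rw [e1, e2]; exact closedBall_subset_closedBall h
      rw [Metric.hausdorffDist_comm, Set.union_comm]
      exact key hu c' c r' r hr' hr hsub (Ne.symm hne)
  · -- disjoint balls
    push_neg at hint
    have hns : (closedBall c r).Nonempty := ⟨c, by simp [hr]⟩
    have hnt : (closedBall c' r').Nonempty := ⟨c', by simp [hr']⟩
    have hbs : IsBounded (closedBall c r) := (Set.toFinite _).isBounded
    have hbt : IsBounded (closedBall c' r') := (Set.toFinite _).isBounded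
    have hfin : EMetric.hausdorffEdist (closedBall c r) (closedBall c' r') ≠ ⊤ :=
      hausdorffEdist_ne_top_of_nonempty_of_bounded hns hnt hbs hbt
    set D := dist c c' with hD
    have hDr : r < D := by
      by_contra h
      push_neg at h
      exact hint c' ⟨mem_closedBall.2 (by rwa [dist_comm]), mem_closedBall_self hr'⟩
    have hDr' : r' < D := by
      by_contra h
      push_neg at h
      exact hint c ⟨mem_closedBall_self hr, mem_closedBall.2 h⟩
    -- every point of the first ball is at distance D from c'
    have hxd : ∀ p ∈ closedBall c r, dist p c' = D := by
      intro p hp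
      have := ultra_iso hu (x := c') (y := p) (c' := c) (r' := r)
        (by rwa [dist_comm]) (mem_closedBall.1 hp)
      rw [dist_comm p c', this, dist_comm]
    have hinf : D ≤ infDist c (closedBall c' r') := by
      by_contra h
      push_neg at h
      obtain ⟨y, hy, hlt⟩ := (infDist_lt_iff hnt).1 h
      rw [ultra_iso hu (x := c) (c' := c') (r' := r') hDr' (mem_closedBall.1 hy)] at hlt
      exact lt_irrefl _ hlt
    have hDH : D ≤ hausdorffDist (closedBall c r) (closedBall c' r') :=
      hinf.trans (infDist_le_hausdorffDist_of_mem (mem_closedBall_self hr) hfin)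
    refine le_antisymm (hausdorffDist_le_diam hns hbs hnt hbt) ?_
    refine diam_le_of_forall_dist_le (hausdorffDist_nonneg) fun p hp q hq => ?_
    refine le_trans ?_ hDH
    rcases hp with hp | hp <;> rcases hq with hq | hq
    · -- both in first ball: dist ≤ r < D
      refine le_trans (le_trans (hu p q c) (max_le (mem_closedBall.1 hp) ?_)) hDr.le
      rw [dist_comm]; exact mem_closedBall.1 hq
    · rw [← hxd p hp]
      exact (ultra_iso hu (by rw [hxd p hp]; exact hDr') (mem_closedBall.1 hq)).le
    · rw [dist_comm, ← hxd q hq]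
      exact (ultra_iso hu (by rw [hxd q hq]; exact hDr') (mem_closedBall.1 hp)).le
    · refine le_trans (le_trans (hu p q c') (max_le (mem_closedBall.1 hp) ?_)) hDr'.le
      rw [dist_comm]; exact mem_closedBall.1 hq
end

section
/- In any finite ultrametric space (Z,d), for nonempty subsets X, Y with X ≠ Y, the Hausdorff distance d_H(X,Y) is a value attained by d, i.e., d_H(X,Y) ∈ Sp(Z); in particular d_H(X,Y) equals the diameter of some closed ball of Z. -/
open Metric

/-- In a finite ultrametric space, the Hausdorff distance between two distinct
nonempty subsets is a value of the metric, and equals the diameter of some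
closed ball. -/
theorem hausdorffDist_mem_spectrum {Z : Type*} [MetricSpace Z] [Fintype Z]
    (hu : ∀ x y z : Z, dist x y ≤ max (dist x z) (dist z y))
    (X Y : Set Z) (hX : X.Nonempty) (hY : Y.Nonempty) (hne : X ≠ Y) :
    (∃ a b : Z, Metric.hausdorffDist X Y = dist a b) ∧
    (∃ (c : Z) (r : ℝ), 0 ≤ r ∧
      Metric.hausdorffDist X Y = Metric.diam (Metric.closedBall c r)) := by
  have fin : EMetric.hausdorffEdist X Y ≠ ⊤ :=
    hausdorffEdist_ne_top_of_nonempty_of_bounded hX hY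
      (Set.toFinite X).isBounded (Set.toFinite Y).isBounded
  -- maximizers of infDist
  obtain ⟨x0, hx0X, hx0max⟩ := Set.exists_max_image X (fun x => infDist x Y) (Set.toFinite X) hX
  obtain ⟨y0, hy0Y, hy0max⟩ := Set.exists_max_image Y (fun y => infDist y X) (Set.toFinite Y) hY
  set M : ℝ := max (infDist x0 Y) (infDist y0 X) with hM
  have hMnonneg : 0 ≤ M := le_trans infDist_nonneg (le_max_left _ _)
  have hHM : hausdorffDist X Y = M := by
    apply le_antisymm
    · exact hausdorffDist_le_of_infDist hMnonneg
        (fun x hx => le_trans (hx0max x hx) (le_max_left _ _))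
        (fun y hy => le_trans (hy0max y hy) (le_max_right _ _))
    · refine max_le ?_ ?_
      · exact infDist_le_hausdorffDist_of_mem hx0X fin
      · rw [hausdorffDist_comm]
        exact infDist_le_hausdorffDist_of_mem hy0Y (by rwa [EMetric.hausdorffEdist_comm])
  -- infDist attained
  have hcY : IsCompact Y := (Set.toFinite Y).isCompact
  have hcX : IsCompact X := (Set.toFinite X).isCompact
  have hab : ∃ a b : Z, hausdorffDist X Y = dist a b := by
    rcases max_cases (infDist x0 Y) (infDist y0 X) with ⟨hmax, _⟩ | ⟨hmax, _⟩
    · obtain ⟨b, _, hb⟩ := hcY.exists_infDist_eq_dist hY x0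
      exact ⟨x0, b, by rw [hHM, hM, hmax, hb]⟩
    · obtain ⟨b, _, hb⟩ := hcX.exists_infDist_eq_dist hX y0
      exact ⟨y0, b, by rw [hHM, hM, hmax, hb]⟩
  refine ⟨hab, ?_⟩
  obtain ⟨a, b, hab'⟩ := hab
  refine ⟨a, dist a b, dist_nonneg, ?_⟩
  rw [hab']
  apply le_antisymm
  · have ha : a ∈ closedBall a (dist a b) := by simp [dist_nonneg]
    have hb : b ∈ closedBall a (dist a b) := by simp [dist_comm]
    exact dist_le_diam_of_mem ((Set.toFinite _).isBounded) ha hb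
  · apply diam_le_of_forall_dist_le dist_nonneg
    intro x hx y hy
    simp only [mem_closedBall] at hx hy
    calc dist x y ≤ max (dist x a) (dist a y) := hu x y a
      _ = max (dist x a) (dist y a) := by rw [dist_comm a y]
      _ ≤ dist a b := max_le hx hy
end

section
/- Let (Z,d) be a finite ultrametric space and X, Y nonempty subsets with X ≠ Y. Define 𝔅_{XY} as the set of closed balls B of Z such that (i) ((X\Y) ∩ B ≠ ∅ and Y ∩ B ≠ ∅) or ((Y\X) ∩ B ≠ ∅ and X ∩ B ≠ ∅), and (ii) there is a maximal proper sub-ball B_k of B (a part of the diametrical graph of B) with exactly one of ((B_k ∩ (X\Y) ≠ ∅ and B_k ∩ Y = ∅)) and ((B_k ∩ (Y\X) ≠ ∅ and B_k ∩ X = ∅)) holding. Then for every x ∈ X Δ Y there exists B ∈ 𝔅_{XY} with x ∈ B. -/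
/-- A closed ball of the space. -/
def IsClosedBall {Z : Type*} [MetricSpace Z] (B : Set Z) : Prop :=
  ∃ (c : Z) (r : ℝ), 0 ≤ r ∧ B = Metric.closedBall c r

/-- The family `𝔅_{XY}` of balls from Definition 2.1: balls `B` meeting both sets
appropriately (condition (i)) and having a part of the diametrical decomposition
of `B` (an equivalence class of `u ~ v ↔ d(u,v) < diam B`) meeting exactly one of
`X \ Y`, `Y \ X` and missing the other set (condition (ii)). -/
def MemBXY {Z : Type*} [MetricSpace Z] (X Y B : Set Z) : Prop :=
  IsClosedBall B ∧
  ((((X \ Y) ∩ B).Nonempty ∧ (Y ∩ B).Nonempty) ∨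
    (((Y \ X) ∩ B).Nonempty ∧ (X ∩ B).Nonempty)) ∧
  (∃ u ∈ B,
    Xor'
      ((({v ∈ B | dist u v < Metric.diam B}) ∩ (X \ Y)).Nonempty ∧
        ({v ∈ B | dist u v < Metric.diam B}) ∩ Y = ∅)
      ((({v ∈ B | dist u v < Metric.diam B}) ∩ (Y \ X)).Nonempty ∧
        ({v ∈ B | dist u v < Metric.diam B}) ∩ X = ∅))

lemma key_s16 {Z : Type*} [MetricSpace Z] [Fintype Z]
    (hu : ∀ x y z : Z, dist x y ≤ max (dist x z) (dist z y))
    (A C : Set Z) (hC : C.Nonempty) (x : Z) (hxA : x ∈ A) (hxC : x ∉ C) :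
    ∃ B : Set Z, IsClosedBall B ∧ x ∈ B ∧ (C ∩ B).Nonempty ∧
      (({v ∈ B | dist x v < Metric.diam B}) ∩ (A \ C)).Nonempty ∧
      ({v ∈ B | dist x v < Metric.diam B}) ∩ C = ∅ := by
  obtain ⟨y0, hy0, hdy0⟩ := (C.toFinite.isCompact).exists_infDist_eq_dist hC x
  set r := Metric.infDist x C with hrdef
  have hr0 : 0 < r := by
    rw [hdy0]
    exact dist_pos.mpr (fun h => hxC (h ▸ hy0))
  set B := Metric.closedBall x r with hBdef
  have hxB : x ∈ B := Metric.mem_closedBall_self hr0.le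
  have hy0B : y0 ∈ B := by
    simp only [hBdef, Metric.mem_closedBall, dist_comm]
    exact hdy0.ge
  have hdiam_le : Metric.diam B ≤ r := by
    apply Metric.diam_le_of_forall_dist_le hr0.le
    intro v hv w hw
    refine (hu v w x).trans (max_le ?_ ?_)
    · exact Metric.mem_closedBall.mp hv
    · rw [dist_comm]; exact Metric.mem_closedBall.mp hw
  have hdiam_pos : 0 < Metric.diam B := by
    have := Metric.dist_le_diam_of_mem (Set.toFinite B).isBounded hxB hy0B
    calc 0 < r := hr0
    _ = dist x y0 := hdy0
    _ ≤ _ := this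
  have hPC : ({v ∈ B | dist x v < Metric.diam B}) ∩ C = ∅ := by
    ext v
    simp only [Set.mem_inter_iff, Set.mem_setOf_eq, Set.mem_empty_iff_false, iff_false]
    rintro ⟨⟨hvB, hvd⟩, hvC⟩
    exact absurd (Metric.infDist_le_dist_of_mem hvC) (by linarith [hvd.trans_le hdiam_le])
  exact ⟨B, ⟨x, r, hr0.le, rfl⟩, hxB, ⟨y0, hy0, hy0B⟩,
    ⟨x, ⟨⟨hxB, by simpa using hdiam_pos⟩, hxA, hxC⟩⟩, hPC⟩

theorem aux_symmDiff {Z : Type*} [MetricSpace Z] [Fintype Z]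
    (hu : ∀ x y z : Z, dist x y ≤ max (dist x z) (dist z y))
    (X Y : Set Z) (hX : X.Nonempty) (hY : Y.Nonempty) (hne : X ≠ Y) :
    ∀ x ∈ symmDiff X Y, ∃ B : Set Z, (IsClosedBall B ∧
  ((((X \ Y) ∩ B).Nonempty ∧ (Y ∩ B).Nonempty) ∨
    (((Y \ X) ∩ B).Nonempty ∧ (X ∩ B).Nonempty)) ∧
  (∃ u ∈ B,
    Xor'
      ((({v ∈ B | dist u v < Metric.diam B}) ∩ (X \ Y)).Nonempty ∧
        ({v ∈ B | dist u v < Metric.diam B}) ∩ Y = ∅)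
      ((({v ∈ B | dist u v < Metric.diam B}) ∩ (Y \ X)).Nonempty ∧
        ({v ∈ B | dist u v < Metric.diam B}) ∩ X = ∅))) ∧ x ∈ B := by
  intro x hx
  rw [Set.mem_symmDiff] at hx
  rcases hx with ⟨hxX, hxY⟩ | ⟨hxY, hxX⟩
  · obtain ⟨B, hball, hxB, hCB, hPne, hPC⟩ := key_s16 hu X Y hY x hxX hxY
    refine ⟨B, ⟨hball, Or.inl ⟨⟨x, ⟨hxX, hxY⟩, hxB⟩, hCB.imp fun y hy => ⟨hy.1, hy.2⟩⟩,
      x, hxB, Or.inl ⟨⟨hPne, hPC⟩, ?_⟩⟩, hxB⟩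
    rintro ⟨⟨v, hvP, hvY, hvX⟩, -⟩
    exact absurd (hPC ▸ (⟨hvP, hvY⟩ : v ∈ _ ∩ Y)) (Set.notMem_empty v)
  · obtain ⟨B, hball, hxB, hCB, hPne, hPC⟩ := key_s16 hu Y X hX x hxY hxX
    refine ⟨B, ⟨hball, Or.inr ⟨⟨x, ⟨hxY, hxX⟩, hxB⟩, hCB.imp fun y hy => ⟨hy.1, hy.2⟩⟩,
      x, hxB, Or.inr ⟨⟨hPne, hPC⟩, ?_⟩⟩, hxB⟩
    rintro ⟨⟨v, hvP, hvX, hvY⟩, -⟩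
    exact absurd (hPC ▸ (⟨hvP, hvX⟩ : v ∈ _ ∩ X)) (Set.notMem_empty v)


/-- Lemma 4.4: every point of the symmetric difference of `X` and `Y` lies in
some ball of the family `𝔅_{XY}`. -/
theorem symmDiff_subset_ball {Z : Type*} [MetricSpace Z] [Fintype Z]
    (hu : ∀ x y z : Z, dist x y ≤ max (dist x z) (dist z y))
    (X Y : Set Z) (hX : X.Nonempty) (hY : Y.Nonempty) (hne : X ≠ Y) :
    ∀ x ∈ symmDiff X Y, ∃ B : Set Z, MemBXY X Y B ∧ x ∈ B := by
  exact aux_symmDiff hu X Y hX hY hne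
end

section
/- Let (Z,d) be a finite ultrametric space and X, Y nonempty subsets with X ≠ Y, and let 𝔅_{XY} be the family of closed balls B of Z satisfying: (i) ((X\Y) ∩ B ≠ ∅ and Y ∩ B ≠ ∅) or ((Y\X) ∩ B ≠ ∅ and X ∩ B ≠ ∅); and (ii) among the equivalence classes of the relation 'u ~ v iff d(u,v) < diam B' on B, there is a class B_k for which exactly one of (B_k ∩ (X\Y) ≠ ∅ and B_k ∩ Y = ∅) and (B_k ∩ (Y\X) ≠ ∅ and B_k ∩ X = ∅) holds. Then the Hausdorff distance satisfies d_H(X,Y) = max over B ∈ 𝔅_{XY} of diam B. -/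
open Metric Set

/-- In an ultrametric space, the diameter of a closed ball is at most its radius. -/
lemma diam_closedBall_le_ultra {Z : Type*} [MetricSpace Z]
    (hu : ∀ x y z : Z, dist x y ≤ max (dist x z) (dist z y))
    (c : Z) (r : ℝ) (hr : 0 ≤ r) : Metric.diam (Metric.closedBall c r) ≤ r := by
  apply Metric.diam_le_of_forall_dist_le hr
  intro x hx y hy
  exact (hu x y c).trans (max_le (Metric.mem_closedBall.mp hx)
    ((dist_comm c y ▸ Metric.mem_closedBall.mp hy)))

/-- Auxiliary construction: if `a ∈ X` realizes the Hausdorff distance as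
`infDist a Y`, then the closed ball around `a` of radius `H` belongs to the family. -/
lemma aux_mem {Z : Type*} [MetricSpace Z] [Fintype Z]
    (hu : ∀ x y z : Z, dist x y ≤ max (dist x z) (dist z y))
    (X Y : Set Z) (hY : Y.Nonempty) (a : Z) (ha : a ∈ X)
    (H : ℝ) (hHpos : 0 < H) (haH : Metric.infDist a Y = H) :
    MemBXY X Y (Metric.closedBall a H) ∧ Metric.diam (Metric.closedBall a H) = H := by
  have haY : a ∉ Y := fun h => by
    rw [Metric.infDist_zero_of_mem h] at haH; linarith
  obtain ⟨b, hbY, hab⟩ := (Set.toFinite Y).isCompact.exists_infDist_eq_dist hY a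
  rw [haH] at hab
  have hbB : b ∈ Metric.closedBall a H := by
    rw [Metric.mem_closedBall, dist_comm, ← hab]
  have haB : a ∈ Metric.closedBall a H := Metric.mem_closedBall_self hHpos.le
  have hdiam : Metric.diam (Metric.closedBall a H) = H := by
    refine le_antisymm (diam_closedBall_le_ultra hu a H hHpos.le) ?_
    calc H = dist a b := hab
    _ ≤ _ := Metric.dist_le_diam_of_mem ((Set.toFinite _).isBounded) haB hbB
  refine ⟨⟨⟨a, H, hHpos.le, rfl⟩, Or.inl ⟨⟨a, ⟨ha, haY⟩, haB⟩, ⟨b, hbY, hbB⟩⟩, a, haB, ?_⟩, hdiam⟩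
  have haC : a ∈ {v ∈ Metric.closedBall a H | dist a v < Metric.diam (Metric.closedBall a H)} := by
    refine ⟨haB, ?_⟩
    rw [hdiam, dist_self]; exact hHpos
  left
  refine ⟨⟨⟨a, haC, ha, haY⟩, ?_⟩, fun h => h.2.subset ⟨haC, ha⟩⟩
  ext v
  simp only [Set.mem_inter_iff, Set.mem_setOf_eq, Set.mem_empty_iff_false, iff_false, not_and,
    and_imp]
  intro _ hv hvY
  rw [hdiam] at hv
  exact absurd hv (not_lt.mpr (haH ▸ Metric.infDist_le_dist_of_mem hvY))

/-- Theorem 4.5: the Hausdorff distance between two distinct nonempty subsets of a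
finite ultrametric space is the maximum of the diameters of the balls in `𝔅_{XY}`. -/
theorem hausdorffDist_eq_max_diam {Z : Type*} [MetricSpace Z] [Fintype Z]
    (hu : ∀ x y z : Z, dist x y ≤ max (dist x z) (dist z y))
    (X Y : Set Z) (hX : X.Nonempty) (hY : Y.Nonempty) (hne : X ≠ Y) :
    IsGreatest {r : ℝ | ∃ B : Set Z, MemBXY X Y B ∧ Metric.diam B = r}
      (Metric.hausdorffDist X Y) := by
  set H := Metric.hausdorffDist X Y with hHdef
  have hfin : EMetric.hausdorffEdist X Y ≠ ⊤ :=
    Metric.hausdorffEdist_ne_top_of_nonempty_of_bounded hX hY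
      (Set.toFinite X).isBounded (Set.toFinite Y).isBounded
  have hHpos : 0 < H := by
    rcases lt_or_eq_of_le (@Metric.hausdorffDist_nonneg _ _ X Y) with h | h
    · exact h
    · exact absurd (((Set.toFinite X).isClosed.hausdorffDist_zero_iff_eq
        (Set.toFinite Y).isClosed hfin).mp h.symm) hne
  constructor
  · -- H is in the set: find a point realizing the Hausdorff distance
    -- consider the finite set of infDist values
    have key : (∃ a ∈ X, Metric.infDist a Y = H) ∨ (∃ a ∈ Y, Metric.infDist a X = H) := by
      classical
      obtain ⟨x0, hx0⟩ := hX
      set S : Finset ℝ := X.toFinset.image (fun x => Metric.infDist x Y) ∪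
        Y.toFinset.image (fun y => Metric.infDist y X) with hS
      have hx0S : Metric.infDist x0 Y ∈ S :=
        Finset.mem_union_left _ (Finset.mem_image.mpr ⟨x0, Set.mem_toFinset.mpr hx0, rfl⟩)
      have hSne : S.Nonempty := ⟨_, hx0S⟩
      have hM0 : 0 ≤ S.max' hSne :=
        le_trans Metric.infDist_nonneg (S.le_max' _ hx0S)
      have hMH : S.max' hSne ≤ H := by
        apply Finset.max'_le
        intro s hs
        rcases Finset.mem_union.mp hs with h | h
        · obtain ⟨x, hx, rfl⟩ := Finset.mem_image.mp h
          exact Metric.infDist_le_hausdorffDist_of_mem (Set.mem_toFinset.mp hx) hfin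
        · obtain ⟨y, hy, rfl⟩ := Finset.mem_image.mp h
          rw [hHdef, Metric.hausdorffDist_comm]
          exact Metric.infDist_le_hausdorffDist_of_mem (Set.mem_toFinset.mp hy)
            (by rwa [EMetric.hausdorffEdist_comm])
      have hHM : H ≤ S.max' hSne := by
        apply Metric.hausdorffDist_le_of_infDist hM0
        · intro x hx
          exact S.le_max' _
            (Finset.mem_union_left _ (Finset.mem_image.mpr ⟨x, Set.mem_toFinset.mpr hx, rfl⟩))
        · intro y hy
          exact S.le_max' _
            (Finset.mem_union_right _ (Finset.mem_image.mpr ⟨y, Set.mem_toFinset.mpr hy, rfl⟩))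
      have hMeq : S.max' hSne = H := le_antisymm hMH hHM
      rcases Finset.mem_union.mp (S.max'_mem hSne) with h | h
      · obtain ⟨x, hx, hxe⟩ := Finset.mem_image.mp h
        exact Or.inl ⟨x, Set.mem_toFinset.mp hx, by rw [hxe, hMeq]⟩
      · obtain ⟨y, hy, hye⟩ := Finset.mem_image.mp h
        exact Or.inr ⟨y, Set.mem_toFinset.mp hy, by rw [hye, hMeq]⟩
    rcases key with ⟨a, ha, haH⟩ | ⟨a, ha, haH⟩
    · obtain ⟨h1, h2⟩ := aux_mem hu X Y hY a ha H hHpos haH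
      exact ⟨_, h1, h2⟩
    · obtain ⟨h1, h2⟩ := aux_mem hu Y X hX a ha H hHpos
        haH
      refine ⟨_, ⟨h1.1, h1.2.1.symm, ?_⟩, h2⟩
      obtain ⟨u, hu', hx⟩ := h1.2.2
      exact ⟨u, hu', hx.symm⟩
  · -- upper bound
    rintro r ⟨B, ⟨⟨c, ρ, hρ, hB⟩, _, u, huB, hXor⟩, hdiam⟩
    by_contra hlt
    push_neg at hlt
    have hdB : Metric.hausdorffDist X Y < Metric.diam B := hdiam ▸ hlt
    have hdρ : Metric.diam B ≤ ρ := hB ▸ diam_closedBall_le_ultra hu c ρ hρ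
    rcases hXor with ⟨⟨⟨x, ⟨hxB, hxd⟩, hxX, _⟩, hCY⟩, _⟩ | ⟨⟨⟨x, ⟨hxB, hxd⟩, hxY, _⟩, hCX⟩, _⟩
    · obtain ⟨y, hyY, hxy⟩ := Metric.exists_dist_lt_of_hausdorffDist_lt hxX hdB hfin
      have hyB : y ∈ B := by
        rw [hB, Metric.mem_closedBall]
        calc dist y c ≤ max (dist y x) (dist x c) := hu y c x
        _ ≤ ρ := max_le (le_of_lt ((dist_comm y x ▸ hxy).trans_le hdρ))
            (by rw [hB] at hxB; exact Metric.mem_closedBall.mp hxB)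
      have hyC : y ∈ {v ∈ B | dist u v < Metric.diam B} := by
        refine ⟨hyB, lt_of_le_of_lt (hu u y x) (max_lt hxd hxy)⟩
      exact absurd hCY (Set.nonempty_iff_ne_empty.mp ⟨y, hyC, hyY⟩)
    · obtain ⟨y, hyX, hxy⟩ := Metric.exists_dist_lt_of_hausdorffDist_lt' hxY hdB hfin
      have hxy' : dist x y < Metric.diam B := dist_comm x y ▸ hxy
      have hyB : y ∈ B := by
        rw [hB, Metric.mem_closedBall]
        calc dist y c ≤ max (dist y x) (dist x c) := hu y c x
        _ ≤ ρ := max_le (le_of_lt ((dist_comm y x ▸ hxy').trans_le hdρ))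
            (by rw [hB] at hxB; exact Metric.mem_closedBall.mp hxB)
      have hyC : y ∈ {v ∈ B | dist u v < Metric.diam B} := by
        refine ⟨hyB, lt_of_le_of_lt (hu u y x) (max_lt hxd hxy')⟩
      exact absurd hCX (Set.nonempty_iff_ne_empty.mp ⟨y, hyC, hyX⟩)
end
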